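/- arXiv:1008.1702 — 7 statements merged into one kernel-verified Lean document; each statement's English description precedes it below -/
import Mathlib

section
/- Let X_1, X_2, ..., X_N be i.i.d. real random variables with E(X_k)=0, Var(X_k)=1, and moment generating function E(e^{u X_k}) finite for |u| ≤ u_0 for some u_0 > 0, and let S_j = X_1 + ... + X_j for 1 ≤ j ≤ N, S_0 = 0. Then for every C > 1 there exists N_0(C) such that for all N ≥ N_0(C): P( max_{0 ≤ j ≤ N} |S_j| ≥ (2 C N log N)^{1/2} ) ≤ 2 N^{1-C}. -/
/-!
Since `E X = 0` and `Var X = 1`, the cumulant generating function satisfies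
`log E e^{tX} = t²/2 + o(t²)`, so for any `v > 1` we have `E e^{tX} ≤ e^{v t²/2}` for small
`t > 0`. The process `exp (u S_j)` is a nonnegative submartingale, so Doob's maximal inequality
gives the Chernoff bound `P(max_{j ≤ N} S_j ≥ a) ≤ e^{-ua} (E e^{uX})^N ≤ e^{-ua + N v u²/2}`.
With `a = √(2 C N log N)`, `u = a / (N v)` (which tends to `0`) and
`v = C / (C - 1)`, the right-hand side is `N^{1-C}`; applying the same to `-X` gives the factor 2.
-/

open MeasureTheory ProbabilityTheory Filter Real Topology
open scoped ENNReal NNReal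

namespace ProbabilityTheory

variable {Ω : Type*} [MeasurableSpace Ω] {μ : Measure Ω}

lemma zero_mem_interior_integrableExpSet {X : Ω → ℝ} {u₀ : ℝ} (hu₀ : 0 < u₀)
    (h : ∀ t : ℝ, |t| ≤ u₀ → Integrable (fun ω ↦ exp (t * X ω)) μ) :
    0 ∈ interior (integrableExpSet X μ) :=
  mem_interior.2 ⟨Set.Ioo (-u₀) u₀, fun t ht ↦ h t (abs_le.2 ⟨ht.1.le, ht.2.le⟩), isOpen_Ioo,
    by simp [hu₀]⟩

variable [IsProbabilityMeasure μ] {X : Ω → ℝ}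

lemma one_le_mgf_of_integral_eq_zero {t : ℝ} (hX : Integrable X μ) (hmean : μ[X] = 0)
    (ht : Integrable (fun ω ↦ exp (t * X ω)) μ) : 1 ≤ mgf X μ t :=
  calc 1 = ∫ ω, (1 + t * X ω) ∂μ := by
        rw [integral_add (integrable_const 1) (hX.const_mul t), integral_const_mul, hmean]
        simp
    _ ≤ mgf X μ t :=
        integral_mono ((integrable_const 1).add (hX.const_mul t)) ht
          fun ω ↦ by linarith [add_one_le_exp (t * X ω)]

lemma eventually_mgf_le_exp_of_variance_lt (h0 : 0 ∈ interior (integrableExpSet X μ))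
    (hmean : μ[X] = 0) {v : ℝ} (hv : variance X μ < v) :
    ∀ᶠ t in 𝓝[>] 0, mgf X μ t ≤ exp (v * t ^ 2 / 2) := by
  have hcgf₂ : iteratedDeriv 2 (cgf X μ) 0 = variance X μ := by
    rw [iteratedDeriv_two_cgf h0, deriv_cgf_zero h0, hmean,
      variance_of_integral_eq_zero (aemeasurable_of_mem_interior_integrableExpSet h0) hmean]
    simp
  have hcont : ContinuousAt (iteratedDeriv 2 (cgf X μ)) 0 := by
    rw [iteratedDeriv_eq_iterate]
    exact ((analyticAt_cgf h0).iterated_deriv 2).continuousAt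
  obtain ⟨δ, hδ, hball⟩ := Metric.eventually_nhds_iff_ball.1
    ((hcont.eventually_lt continuousAt_const (hcgf₂ ▸ hv)).and
      (isOpen_interior.eventually_mem h0))
  filter_upwards [Ioo_mem_nhdsGT hδ] with t ht
  have hIcc : Set.Icc 0 t ⊆ Metric.ball 0 δ := fun s hs ↦ by
    rw [Metric.mem_ball, dist_zero_right, norm_of_nonneg hs.1]
    exact hs.2.trans_lt ht.2
  obtain ⟨s, hs, hcgf⟩ := exists_cgf_eq_iteratedDeriv_two_cgf_mul ht.1 hmean
    fun s hs ↦ (hball s (hIcc hs)).2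
  have ht_int := interior_subset (s := integrableExpSet X μ) (hball t (hIcc ⟨ht.1.le, le_rfl⟩)).2
  rw [← exp_cgf ht_int, exp_le_exp, hcgf]
  have hs_lt := (hball s (hIcc (Set.Ioo_subset_Icc_self hs))).1
  gcongr


lemma eventually_mgf_le_exp_and_mgf_neg_le_exp_of_variance_lt
    (h0 : 0 ∈ interior (integrableExpSet X μ)) (hmean : μ[X] = 0) {v : ℝ}
    (hv : variance X μ < v) :
    ∀ᶠ t in 𝓝[>] 0, mgf X μ t ≤ exp (v * t ^ 2 / 2) ∧ mgf X μ (-t) ≤ exp (v * t ^ 2 / 2) := by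
  have h0' : 0 ∈ interior (integrableExpSet (-X) μ) := by
    have : integrableExpSet (-X) μ = Homeomorph.neg ℝ ⁻¹' integrableExpSet X μ := by
      ext t; simp [integrableExpSet]
    rw [this, ← Homeomorph.preimage_interior]
    simpa using h0
  filter_upwards [eventually_mgf_le_exp_of_variance_lt h0 hmean hv,
    eventually_mgf_le_exp_of_variance_lt h0' (by simp [integral_neg, hmean])
      (by rwa [variance_neg])] with t ht ht'
  exact ⟨ht, mgf_neg (X := X) ▸ ht'⟩

section PartialSums

variable {X : ℕ → Ω → ℝ} {u : ℝ}

/-- Indexed by `k ↦ S (k + 1)`: the natural filtration at time `k` already sees `X k`, so the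
increment independent of it is `X (k + 1)`. -/
lemma iIndepFun.submartingale_exp_mul_sum_range (hmeas : ∀ i, Measurable (X i))
    (hindep : iIndepFun X μ) (hint : ∀ i, Integrable (fun ω ↦ exp (u * X i ω)) μ)
    (hone : ∀ i, 1 ≤ mgf (X i) μ u) :
    Submartingale (fun k ω ↦ exp (u * ∑ i ∈ Finset.range (k + 1), X i ω))
      (Filtration.natural X fun i ↦ (hmeas i).stronglyMeasurable) μ := by
  set ℱ := Filtration.natural X fun i ↦ (hmeas i).stronglyMeasurable
  set g : ℕ → Ω → ℝ := fun k ω ↦ exp (u * ∑ i ∈ Finset.range (k + 1), X i ω)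
  have hintg (k : ℕ) : Integrable (g k) μ := by
    simpa [g, Finset.sum_apply] using
      hindep.integrable_exp_mul_sum hmeas (s := Finset.range (k + 1)) fun i _ ↦ hint i
  have hadp : StronglyAdapted ℱ g := fun k ↦ by
    refine continuous_exp.comp_stronglyMeasurable
      ((Finset.stronglyMeasurable_fun_sum _ fun i hi ↦ ?_).const_mul u)
    exact (Filtration.stronglyAdapted_natural _ i).mono
      (ℱ.mono (Nat.lt_succ_iff.mp (Finset.mem_range.mp hi)))
  refine submartingale_nat hadp hintg fun k ↦ ?_
  have hsplit : g (k + 1) = g k * fun ω ↦ exp (u * X (k + 1) ω) := by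
    funext ω
    simp [g, Finset.sum_range_succ _ (k + 1), mul_add, exp_add]
  have hmul : μ[g (k + 1)|ℱ k] =ᵐ[μ] g k * μ[fun ω ↦ exp (u * X (k + 1) ω)|ℱ k] := by
    rw [hsplit]
    exact condExp_mul_of_stronglyMeasurable_left (hadp k) (hsplit ▸ hintg (k + 1)) (hint (k + 1))
  have hcond : μ[fun ω ↦ exp (u * X (k + 1) ω)|ℱ k] =ᵐ[μ] fun _ ↦ mgf (X (k + 1)) μ u :=
    condExp_indep_eq (hmeas (k + 1)).comap_le (ℱ.le k)
      ((comap_measurable (X (k + 1))).const_mul u).exp.stronglyMeasurable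
      (hindep.indep_comap_natural_of_lt _ (lt_add_one k))
  filter_upwards [hmul, hcond] with ω hω₁ hω₂
  rw [hω₁, Pi.mul_apply, hω₂]
  exact le_mul_of_one_le_right (exp_pos _).le (hone (k + 1))

lemma iIndepFun.measure_exists_sum_range_ge_le (hmeas : ∀ i, Measurable (X i))
    (hindep : iIndepFun X μ) (hu : 0 ≤ u) (hint : ∀ i, Integrable (fun ω ↦ exp (u * X i ω)) μ)
    (hone : ∀ i, 1 ≤ mgf (X i) μ u) {a : ℝ} (ha : 0 < a) (N : ℕ) :
    μ {ω | ∃ j ≤ N, a ≤ ∑ i ∈ Finset.range j, X i ω}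
      ≤ ENNReal.ofReal (exp (-(u * a)) * ∏ i ∈ Finset.range N, mgf (X i) μ u) := by
  rcases N with _ | n
  · simp [ha.not_ge]
  have hsub := hindep.submartingale_exp_mul_sum_range hmeas hint hone
  set g : ℕ → Ω → ℝ := fun k ω ↦ exp (u * ∑ i ∈ Finset.range (k + 1), X i ω)
  set ε : ℝ≥0 := (exp (u * a)).toNNReal
  set B := {ω | (ε : ℝ) ≤ (Finset.range (n + 1)).sup' Finset.nonempty_range_add_one
    fun k ↦ g k ω}
  have hAB : {ω | ∃ j ≤ n + 1, a ≤ ∑ i ∈ Finset.range j, X i ω} ⊆ B := by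
    rintro ω ⟨j, hj, hja⟩
    obtain ⟨k, rfl⟩ : ∃ k, j = k + 1 :=
      Nat.exists_eq_succ_of_ne_zero (by rintro rfl; simp at hja; linarith)
    refine le_trans ?_
      (Finset.le_sup' (fun k ↦ g k ω) (Finset.mem_range.2 (show k < n + 1 by omega)))
    rw [Real.coe_toNNReal _ (exp_pos _).le]
    exact exp_le_exp.2 (mul_le_mul_of_nonneg_left hja hu)
  have hintegral : ∫ ω, g n ω ∂μ = ∏ i ∈ Finset.range (n + 1), mgf (X i) μ u := by
    rw [← hindep.mgf_sum hmeas]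
    simp [g, mgf, Finset.sum_apply]
  have hB : ε * μ B ≤ ENNReal.ofReal (∏ i ∈ Finset.range (n + 1), mgf (X i) μ u) :=
    (maximal_ineq hsub (fun k ω ↦ (exp_pos _).le) n).trans <| ENNReal.ofReal_le_ofReal <|
      (setIntegral_le_integral (hsub.integrable n) (.of_forall fun ω ↦ (exp_pos _).le)).trans
        hintegral.le
  have hε : (ε : ℝ≥0∞) = ENNReal.ofReal (exp (u * a)) := rfl
  calc μ {ω | ∃ j ≤ n + 1, a ≤ ∑ i ∈ Finset.range j, X i ω} ≤ μ B := measure_mono hAB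
    _ ≤ ENNReal.ofReal (∏ i ∈ Finset.range (n + 1), mgf (X i) μ u) / ε := by
      rw [ENNReal.le_div_iff_mul_le (.inl (by simp [hε, exp_pos])) (.inl ENNReal.coe_ne_top),
        mul_comm]
      exact hB
    _ = _ := by
      rw [hε, ← ENNReal.ofReal_div_of_pos (exp_pos _), div_eq_inv_mul, exp_neg]

lemma iIndepFun.measure_exists_sum_range_ge_le_exp (hmeas : ∀ i, Measurable (X i))
    (hindep : iIndepFun X μ) (hu : 0 ≤ u) (hX : ∀ i, Integrable (X i) μ) (hmean : ∀ i, μ[X i] = 0)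
    (hint : ∀ i, Integrable (fun ω ↦ exp (u * X i ω)) μ) {v : ℝ}
    (hmgf : ∀ i, mgf (X i) μ u ≤ exp (v * u ^ 2 / 2)) {a : ℝ} (ha : 0 < a) (N : ℕ) :
    μ {ω | ∃ j ≤ N, a ≤ ∑ i ∈ Finset.range j, X i ω}
      ≤ ENNReal.ofReal (exp (-(u * a) + N * (v * u ^ 2 / 2))) := by
  refine (hindep.measure_exists_sum_range_ge_le hmeas hu hint
    (fun i ↦ one_le_mgf_of_integral_eq_zero (hX i) (hmean i) (hint i)) ha N).trans
    (ENNReal.ofReal_le_ofReal ?_)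
  calc exp (-(u * a)) * ∏ i ∈ Finset.range N, mgf (X i) μ u
      ≤ exp (-(u * a)) * ∏ _i ∈ Finset.range N, exp (v * u ^ 2 / 2) := by
        gcongr with i
        · exact fun i _ ↦ mgf_nonneg
        · exact hmgf i
    _ = exp (-(u * a) + N * (v * u ^ 2 / 2)) := by
        rw [Finset.prod_const, Finset.card_range, ← exp_nat_mul, ← exp_add]

lemma iIndepFun.measure_exists_abs_sum_range_ge_le_exp (hmeas : ∀ i, Measurable (X i))
    (hindep : iIndepFun X μ) (hu : 0 ≤ u) (hX : ∀ i, Integrable (X i) μ) (hmean : ∀ i, μ[X i] = 0)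
    (hint : ∀ i, Integrable (fun ω ↦ exp (u * X i ω)) μ)
    (hint' : ∀ i, Integrable (fun ω ↦ exp (-u * X i ω)) μ) {v : ℝ}
    (hmgf : ∀ i, mgf (X i) μ u ≤ exp (v * u ^ 2 / 2))
    (hmgf' : ∀ i, mgf (X i) μ (-u) ≤ exp (v * u ^ 2 / 2)) {a : ℝ} (ha : 0 < a) (N : ℕ) :
    μ {ω | ∃ j ≤ N, a ≤ |∑ i ∈ Finset.range j, X i ω|}
      ≤ ENNReal.ofReal (2 * exp (-(u * a) + N * (v * u ^ 2 / 2))) := by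
  have hup := hindep.measure_exists_sum_range_ge_le_exp hmeas hu hX hmean hint hmgf ha N
  have hindep_neg : iIndepFun (fun i ω ↦ -X i ω) μ :=
    hindep.comp (fun _ x ↦ -x) fun _ ↦ measurable_neg
  have hdown := hindep_neg.measure_exists_sum_range_ge_le_exp
    (fun i ↦ (hmeas i).neg) hu (fun i ↦ (hX i).neg) (fun i ↦ by simp [integral_neg, hmean i])
    (fun i ↦ by simpa [mul_neg, neg_mul] using hint' i)
    (fun i ↦ by simpa [mgf_neg] using hmgf' i) ha N
  calc μ {ω | ∃ j ≤ N, a ≤ |∑ i ∈ Finset.range j, X i ω|}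
      ≤ μ ({ω | ∃ j ≤ N, a ≤ ∑ i ∈ Finset.range j, X i ω}
          ∪ {ω | ∃ j ≤ N, a ≤ ∑ i ∈ Finset.range j, -X i ω}) := by
        refine measure_mono fun ω ⟨j, hj, hja⟩ ↦ ?_
        rcases le_abs.1 hja with h | h
        · exact .inl ⟨j, hj, h⟩
        · exact .inr ⟨j, hj, by simpa [Finset.sum_neg_distrib] using h⟩
    _ ≤ _ := (measure_union_le _ _).trans (add_le_add hup hdown)
    _ = _ := by rw [← ENNReal.ofReal_add (exp_pos _).le (exp_pos _).le, two_mul]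

end PartialSums

end ProbabilityTheory

lemma tendsto_sqrt_mul_log_div_natCast_nhdsGT_zero {c v : ℝ} (hc : 0 < c) (hv : 0 < v) :
    Tendsto (fun N : ℕ ↦ √(c * N * log N) / (N * v)) atTop (𝓝[>] 0) := by
  have hlog : Tendsto (fun N : ℕ ↦ log N / N) atTop (𝓝 0) :=
    isLittleO_log_id_atTop.tendsto_div_nhds_zero.comp tendsto_natCast_atTop_atTop
  refine tendsto_nhdsWithin_iff.2 ⟨?_, ?_⟩
  · have hsqrt := (hlog.const_mul c).sqrt.div_const v
    rw [mul_zero, sqrt_zero, zero_div] at hsqrt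
    refine hsqrt.congr' ((eventually_gt_atTop 0).mono fun N hN ↦ ?_)
    have hN' : (0 : ℝ) < N := by exact_mod_cast hN
    show _ = √(c * N * log N) / (N * v)
    have hsq : c * (log N / N) = c * N * log N / (N : ℝ) ^ 2 := by field_simp
    rw [hsq, sqrt_div' _ (sq_nonneg _), sqrt_sq hN'.le, div_div]
  · filter_upwards [eventually_ge_atTop 2] with N hN
    have hN' : (1 : ℝ) < N := by exact_mod_cast hN
    exact Set.mem_Ioi.2 (by positivity [log_pos hN'])

/-- Let `X_1, X_2, …` be i.i.d. real random variables with mean `0`, variance `1`,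
and moment generating function finite on `|u| ≤ u₀` for some `u₀ > 0`; let
`S_j = X_1 + ⋯ + X_j` (here `S j ω = Σ_{i<j} X i ω`, `S_0 = 0`).  Then for every `C > 1`
there is `N₀(C)` such that for all `N ≥ N₀(C)`:
`P( max_{0 ≤ j ≤ N} |S_j| ≥ (2 C N log N)^{1/2} ) ≤ 2 N^{1−C}`. -/
theorem statement0 {Ω : Type*} [MeasurableSpace Ω] (P : Measure Ω) [IsProbabilityMeasure P]
    (X : ℕ → Ω → ℝ)
    (hmeas : ∀ k, Measurable (X k))
    (hindep : iIndepFun X P)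
    (hident : ∀ k, IdentDistrib (X k) (X 0) P P)
    (hmean : ∀ k, ∫ ω, X k ω ∂P = 0)
    (hvar : ∀ k, variance (X k) P = 1)
    (u₀ : ℝ) (hu₀ : 0 < u₀)
    (hmgf : ∀ k, ∀ u : ℝ, |u| ≤ u₀ → Integrable (fun ω => Real.exp (u * X k ω)) P) :
    ∀ C : ℝ, 1 < C → ∃ N₀ : ℕ, ∀ N : ℕ, N₀ ≤ N →
      P {ω | ∃ j ≤ N, (2 * C * N * Real.log N) ^ ((1:ℝ)/2)
          ≤ |∑ i ∈ Finset.range j, X i ω|}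
        ≤ ENNReal.ofReal (2 * (N : ℝ) ^ (1 - C)) := by
  intro C hC
  set v := C / (C - 1)
  have hv : 1 < v := (one_lt_div (by linarith)).2 (by linarith)
  have h0 (k : ℕ) : 0 ∈ interior (integrableExpSet (X k) P) :=
    zero_mem_interior_integrableExpSet hu₀ (hmgf k)
  have hsmall := eventually_mgf_le_exp_and_mgf_neg_le_exp_of_variance_lt (h0 0) (hmean 0)
    (hvar 0 ▸ hv)
  obtain ⟨N₀, hN₀⟩ := eventually_atTop.1 <|
    ((tendsto_sqrt_mul_log_div_natCast_nhdsGT_zero (c := 2 * C) (by positivity)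
      (by positivity : 0 < v)).eventually (hsmall.and (Ioo_mem_nhdsGT hu₀))).and
      (eventually_ge_atTop 2)
  refine ⟨N₀, fun N hN ↦ ?_⟩
  obtain ⟨⟨⟨hmgf_pos, hmgf_neg⟩, hu_pos, hu_le⟩, hN2⟩ := hN₀ N hN
  rw [← sqrt_eq_rpow]
  set a := √(2 * C * N * log N)
  set u := a / (N * v)
  have hN1 : (1 : ℝ) < N := by exact_mod_cast hN2
  have ha2 : a ^ 2 = 2 * C * N * log N := sq_sqrt (by positivity [log_pos hN1])
  have ha : 0 < a := sqrt_pos.2 (by positivity [log_pos hN1])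
  have hu : |u| ≤ u₀ := (abs_of_pos hu_pos).le.trans hu_le.le
  refine (hindep.measure_exists_abs_sum_range_ge_le_exp hmeas hu_pos.le
    (fun i ↦ integrable_of_mem_interior_integrableExpSet (h0 i)) hmean
    (fun i ↦ hmgf i u hu) (fun i ↦ hmgf i (-u) (by rwa [abs_neg]))
    (fun i ↦ by rwa [mgf_congr_identDistrib (hident i)])
    (fun i ↦ by rwa [mgf_congr_identDistrib (hident i)])
    ha N).trans_eq ?_
  -- `u = a / (N v)` minimises the Chernoff exponent, and `v = C / (C - 1)` turns its minimum
  -- `-a² / (2 N v)` into `(1 - C) log N`.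
  rw [rpow_def_of_pos (by linarith)]
  congr 3
  clear_value a
  calc -(u * a) + N * (v * u ^ 2 / 2) = -(a ^ 2 / (2 * N * v)) := by
        simp only [u]; field_simp; ring
    _ = log N * (1 - C) := by
        rw [ha2]; simp only [v]; field_simp; ring
end

section
/- For any K > 0 and C > 1 there exists m_0(C) such that for all m ≥ m_0(C): P( max_{0 ≤ k 2^{-2m} ≤ K} | T_{m+1}(k) 2^{-2(m+1)} − k 2^{-2m} | ≥ ((3/2) C K log_* K)^{1/2} m^{1/2} 2^{-m} ) ≤ 2 (K 2^{2m})^{1-C}. -/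
/-!
Started at an even time, a `±1` walk either takes two equal steps and reaches distance `2`, or
two opposite steps and is back where it started. Hence `T_{m+1}(k) = 2 τ_k`, where `τ_k` is the
number of pairs `(X(2j+1), X(2j+2))` read until the `k`-th straight one (equal entries), and the
number of straight pairs among the first `n` is `(n + ∑_{j<n} X(2j+1) X(2j+2)) / 2`, a sum of
independent signs. So `|T(k) - 4k| ≥ 2r` forces one of two such sums, of length at most `2k + r`, to reach
`⌊r⌋`, which by Hoeffding's inequality has probability at most `exp(-⌊r⌋² / (2(2Q + r)))` with
`Q = K 4^m`. Rescaled by `4^{m+1}`, the threshold of the theorem is `2r` with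
`r² = 6 C log_*(K) m Q`, while `log Q ≤ log_*(K) (1 + 7m/5)`; for large `m` each probability is
at most `Q^{-C}`, and a union bound over `1 ≤ k ≤ Q` gives `2 Q^{1-C}`.
-/

open MeasureTheory ProbabilityTheory Filter

/-- `log_*(x) = max(1, log x)`. -/
noncomputable def logStar (x : ℝ) : ℝ := max 1 (Real.log x)

open Finset

section PlusMinusOne

variable {a b : ℝ}

lemma add_eq_zero_of_ne_of_pm_one (ha : a = 1 ∨ a = -1) (hb : b = 1 ∨ b = -1) (hab : a ≠ b) :
    a + b = 0 := by
  rcases ha with rfl | rfl <;> rcases hb with rfl | rfl <;>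
    first | exact absurd rfl hab | norm_num

lemma abs_add_self_of_pm_one (ha : a = 1 ∨ a = -1) : |a + a| = 2 := by
  rcases ha with rfl | rfl <;> norm_num

lemma mul_eq_ite_of_pm_one (ha : a = 1 ∨ a = -1) (hb : b = 1 ∨ b = -1) :
    a * b = if a = b then 1 else -1 := by
  rcases ha with rfl | rfl <;> rcases hb with rfl | rfl <;> norm_num

end PlusMinusOne

noncomputable def straightCount (x : ℕ → ℝ) (n : ℕ) : ℕ :=
  #{j ∈ range n | x (2 * j + 1) = x (2 * j + 2)}

namespace straightCount

variable (x : ℕ → ℝ)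

lemma succ (n : ℕ) : straightCount x (n + 1) =
    straightCount x n + if x (2 * n + 1) = x (2 * n + 2) then 1 else 0 := by
  simp only [straightCount, card_filter, sum_range_succ]

lemma monotone : Monotone (straightCount x) := fun _ _ h =>
  card_le_card (filter_subset_filter _ (range_subset_range.2 h))

lemma succ_le (n : ℕ) : straightCount x (n + 1) ≤ straightCount x n + 1 := by
  rw [succ]; split <;> omega

lemma sum_mul_eq (hx : ∀ i, x i = 1 ∨ x i = -1) (n : ℕ) :
    ∑ j ∈ range n, x (2 * j + 1) * x (2 * j + 2) = 2 * (straightCount x n : ℝ) - n := by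
  induction n with
  | zero => simp [straightCount]
  | succ n ih =>
    rw [sum_range_succ, ih, succ, mul_eq_ite_of_pm_one (hx _) (hx _)]
    split <;> push_cast <;> ring

lemma apply_sInf_eq {k : ℕ} (hk : ∃ n, k ≤ straightCount x n) :
    straightCount x (sInf {n | k ≤ straightCount x n}) = k := by
  set f := sInf {n | k ≤ straightCount x n}
  refine le_antisymm ?_ (Nat.sInf_mem hk)
  rcases Nat.eq_zero_or_pos f with hf | hf
  · simp [hf, straightCount]
  · have hlt : ¬ k ≤ straightCount x (f - 1) :=
      Nat.notMem_of_lt_sInf (s := {n | k ≤ straightCount x n}) (by omega)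
    have := succ_le x (f - 1)
    rw [Nat.sub_add_cancel hf] at this
    omega

end straightCount

section Walk

variable {x s : ℕ → ℝ} {t : ℕ → ℕ}
  (hx : ∀ i, x i = 1 ∨ x i = -1) (hs : ∀ n, s (n + 1) = s n + x (n + 1))
include hx hs

lemma sInf_exit_eq {a b : ℕ} (hab : a ≤ b)
    (hturn : ∀ j, a ≤ j → j < b → x (2 * j + 1) ≠ x (2 * j + 2))
    (hstraight : x (2 * b + 1) = x (2 * b + 2)) :
    sInf {n | 2 * a < n ∧ |s n - s (2 * a)| = 2} = 2 * b + 2 := by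
  have hflat : ∀ j, a ≤ j → j ≤ b → s (2 * j) = s (2 * a) := by
    intro j haj hjb
    induction j, haj using Nat.le_induction with
    | base => rfl
    | succ j haj ih =>
      rw [show 2 * (j + 1) = 2 * j + 1 + 1 by ring, hs, hs, add_assoc,
        add_eq_zero_of_ne_of_pm_one (hx _) (hx _) (hturn j haj (by omega)), add_zero,
        ih (by omega)]
  have hmem : 2 * b + 2 ∈ {n | 2 * a < n ∧ |s n - s (2 * a)| = 2} := by
    refine ⟨by omega, ?_⟩
    rw [hs, hs, ← hflat b hab le_rfl, hstraight, add_assoc, add_sub_cancel_left]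
    exact abs_add_self_of_pm_one (hx _)
  refine le_antisymm (Nat.sInf_le hmem) (le_csInf ⟨_, hmem⟩ fun n ⟨hlt, hn⟩ => ?_)
  by_contra! hnb
  obtain ⟨j, rfl | rfl⟩ := Nat.even_or_odd' n
  · rw [hflat j (by omega) (by omega), sub_self, abs_zero] at hn
    norm_num at hn
  · rw [hs, hflat j (by omega) (by omega), add_sub_cancel_left] at hn
    rcases hx (2 * j + 1) with h | h <;> rw [h] at hn <;> norm_num at hn

variable (ht0 : t 0 = 0) (ht : ∀ k, t (k + 1) = sInf {n | t k < n ∧ |s n - s (t k)| = 2})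
include ht0 ht

theorem hit_eq_two_mul_sInf (k : ℕ) (hk : ∃ n, k ≤ straightCount x n) :
    t k = 2 * sInf {n | k ≤ straightCount x n} := by
  induction k with
  | zero => simp [ht0]
  | succ k ih =>
    obtain ⟨N, hN⟩ := hk
    set f := sInf {n | k ≤ straightCount x n}
    set f' := sInf {n | k + 1 ≤ straightCount x n}
    have hf : straightCount x f = k := straightCount.apply_sInf_eq x ⟨N, by omega⟩
    have hf' : straightCount x f' = k + 1 := straightCount.apply_sInf_eq x ⟨N, hN⟩
    have hff' : f < f' := (straightCount.monotone x).reflect_lt (by omega)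
    have hplateau : ∀ j, f ≤ j → j < f' → straightCount x j = k := fun j hfj hjf' =>
      le_antisymm (Nat.lt_succ_iff.1 (not_le.1
        (Nat.notMem_of_lt_sInf (s := {n | k + 1 ≤ straightCount x n}) hjf')))
        (hf ▸ straightCount.monotone x hfj)
    have hstep := straightCount.succ x (f' - 1)
    rw [Nat.sub_add_cancel (by omega), hf', hplateau _ (by omega) (by omega)] at hstep
    rw [ht, ih ⟨N, by omega⟩, sInf_exit_eq hx hs (a := f) (b := f' - 1) (by omega)]
    · omega
    · intro j hfj hjb hstraight
      have := straightCount.succ x j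
      rw [if_pos hstraight, hplateau j hfj (by omega),
        hplateau (j + 1) (by omega) (by omega)] at this
      omega
    · by_contra hturn
      rw [if_neg hturn] at hstep
      omega

theorem hit_le_of_le_straightCount {k n : ℕ} (hk : k ≤ straightCount x n) : t k ≤ 2 * n := by
  rw [hit_eq_two_mul_sInf hx hs ht0 ht k ⟨n, hk⟩]
  exact Nat.mul_le_mul_left 2 (Nat.sInf_le hk)

theorem le_straightCount_of_hit_le {k n N : ℕ} (hN : k ≤ straightCount x N) (hkn : t k ≤ 2 * n) :
    k ≤ straightCount x n := by
  rw [hit_eq_two_mul_sInf hx hs ht0 ht k ⟨N, hN⟩] at hkn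
  rw [← straightCount.apply_sInf_eq x ⟨N, hN⟩]
  exact straightCount.monotone x (by omega)

theorem pair_sum_ge_of_deviation {k : ℕ} {r : ℝ} (hk : 1 ≤ k) (hr : 0 ≤ r)
    (hdev : 2 * r ≤ |(t k : ℝ) - 4 * k|) :
    (⌊r⌋₊ : ℝ) ≤ ∑ j ∈ range (2 * k + ⌊r⌋₊ - 1), -(x (2 * j + 1) * x (2 * j + 2)) ∨
      (⌊r⌋₊ : ℝ) ≤ ∑ j ∈ range (2 * k - ⌊r⌋₊), x (2 * j + 1) * x (2 * j + 2) := by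
  set F := ⌊r⌋₊
  have hFr : (F : ℝ) ≤ r := Nat.floor_le hr
  -- `2k + F - 1` pairs end before time `4k + 2r`, and `2k - F` pairs end by time `4k - 2r`.
  by_cases hZ : k ≤ straightCount x (2 * k + F - 1)
  · right
    have hup : (t k : ℝ) ≤ 2 * (2 * k + F - 1 : ℕ) := by
      exact_mod_cast hit_le_of_le_straightCount hx hs ht0 ht hZ
    rw [Nat.cast_sub (by omega)] at hup
    push_cast at hup
    have hlow : (t k : ℝ) ≤ 4 * k - 2 * r := by
      rcases le_abs'.1 hdev with h | h <;> linarith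
    have hF2k : F ≤ 2 * k := by
      have : (F : ℝ) ≤ 2 * k := by linarith [(t k).cast_nonneg (α := ℝ)]
      exact_mod_cast this
    have hZ' : k ≤ straightCount x (2 * k - F) := by
      refine le_straightCount_of_hit_le hx hs ht0 ht hZ ?_
      have : (t k : ℝ) ≤ 2 * (2 * k - F : ℕ) := by
        rw [Nat.cast_sub hF2k]; push_cast; linarith
      exact_mod_cast this
    rw [straightCount.sum_mul_eq x hx, Nat.cast_sub hF2k]
    have : (k : ℝ) ≤ straightCount x (2 * k - F) := by exact_mod_cast hZ'
    push_cast
    linarith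
  · left
    have hZ' : (straightCount x (2 * k + F - 1) : ℝ) + 1 ≤ k := by
      exact_mod_cast (not_le.1 hZ)
    rw [sum_neg_distrib, straightCount.sum_mul_eq x hx, Nat.cast_sub (by omega)]
    push_cast
    linarith

end Walk

section Rademacher

variable {Ω : Type*} [MeasurableSpace Ω] {P : Measure Ω} [IsProbabilityMeasure P] {Y : Ω → ℝ}

lemma ae_eq_one_or_eq_neg_one (hY : Measurable Y) (h1 : P {ω | Y ω = 1} = 1 / 2)
    (h2 : P {ω | Y ω = -1} = 1 / 2) : ∀ᵐ ω ∂P, Y ω = 1 ∨ Y ω = -1 := by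
  have hdisj : Disjoint {ω | Y ω = 1} {ω | Y ω = -1} :=
    Set.disjoint_left.2 fun ω (h : Y ω = 1) (h' : Y ω = -1) => by norm_num [h] at h'
  have hunion : P ({ω | Y ω = 1} ∪ {ω | Y ω = -1}) = 1 := by
    rw [measure_union hdisj (hY (measurableSet_singleton _)), h1, h2, ENNReal.add_halves]
  exact (prob_compl_eq_zero_iff
    ((hY (measurableSet_singleton _)).union (hY (measurableSet_singleton _)))).2 hunion

lemma integral_eq_zero_of_rademacher (hY : Measurable Y) (h1 : P {ω | Y ω = 1} = 1 / 2)
    (h2 : P {ω | Y ω = -1} = 1 / 2) : P[Y] = 0 := by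
  have hA : MeasurableSet {ω | Y ω = 1} := hY (measurableSet_singleton _)
  have hB : MeasurableSet {ω | Y ω = -1} := hY (measurableSet_singleton _)
  have hY' : Y =ᵐ[P] fun ω ↦ {ω | Y ω = 1}.indicator 1 ω - {ω | Y ω = -1}.indicator 1 ω := by
    filter_upwards [ae_eq_one_or_eq_neg_one hY h1 h2] with ω hω
    rcases hω with h | h <;> norm_num [Set.indicator_apply, h]
  rw [integral_congr_ae hY', integral_sub ((integrable_const 1).indicator hA)
    ((integrable_const 1).indicator hB), integral_indicator_one hA, integral_indicator_one hB,
    measureReal_def, measureReal_def, h1, h2, sub_self]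

end Rademacher

namespace ProbabilityTheory

variable {Ω : Type*} [MeasurableSpace Ω] {P : Measure Ω}

lemma iIndepFun.curry {ι : Type*} {κ : ι → Type*} {𝓧 : (i : ι) → κ i → Type*}
    [∀ i j, MeasurableSpace (𝓧 i j)] {X : (i : ι) → (j : κ i) → Ω → 𝓧 i j}
    (mX : ∀ i j, Measurable (X i j)) (h : iIndepFun (fun (p : (i : ι) × κ i) ω ↦ X p.1 p.2 ω) P) :
    iIndepFun (fun i ω ↦ (X i · ω)) P := by
  have := h.isProbabilityMeasure
  have : ∀ i j, IsProbabilityMeasure (P.map (X i j)) :=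
    fun i j ↦ Measure.isProbabilityMeasure_map (mX i j).aemeasurable
  have hcurry : (fun ω i j ↦ X i j ω) =
      (MeasurableEquiv.piCurry 𝓧) ∘ (fun ω (p : (i : ι) × κ i) ↦ X p.1 p.2 ω) := by
    ext; simp [Sigma.curry]
  rw [iIndepFun_iff_map_fun_eq_infinitePi_map (by fun_prop), hcurry,
    ← Measure.map_map (by fun_prop) (by fun_prop),
    (iIndepFun_iff_map_fun_eq_infinitePi_map (by fun_prop)).1 h,
    Measure.infinitePi_map_piCurry (fun i j ↦ P.map (X i j))]
  congrm Measure.infinitePi fun i ↦ ?_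
  exact ((iIndepFun_iff_map_fun_eq_infinitePi_map (by fun_prop)).1
    (h.precomp sigma_mk_injective)).symm

lemma iIndepFun.pair_mul {X : ℕ → Ω → ℝ} (h : iIndepFun X P) (hm : ∀ i, Measurable (X i)) :
    iIndepFun (fun j ω ↦ X (2 * j + 1) ω * X (2 * j + 2) ω) P := by
  have hinj : Function.Injective fun p : (_ : ℕ) × Fin 2 ↦ 2 * p.1 + 1 + p.2 := by
    rintro ⟨j, a⟩ ⟨j', a'⟩ h
    have : j = j' ∧ (a : ℕ) = a' := by simp only at h; omega
    obtain ⟨rfl, ha⟩ := this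
    rw [Fin.ext ha]
  exact (iIndepFun.curry (X := fun j (a : Fin 2) ↦ X (2 * j + 1 + a)) (fun _ _ ↦ hm _)
    (h.precomp hinj)).comp (fun _ y ↦ y 0 * y 1) fun _ ↦ by fun_prop

end ProbabilityTheory

section Hoeffding

variable {Ω : Type*} [MeasurableSpace Ω] {P : Measure Ω} [IsProbabilityMeasure P]

lemma measureReal_sum_range_ge_le {Y : ℕ → Ω → ℝ} (hind : iIndepFun Y P)
    (hm : ∀ j, Measurable (Y j)) (hbd : ∀ j, ∀ᵐ ω ∂P, |Y j ω| ≤ 1) (hmean : ∀ j, P[Y j] = 0)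
    {ε N : ℝ} (hε : 0 < ε) {n : ℕ} (hnN : (n : ℝ) ≤ N) :
    P.real {ω | ε ≤ ∑ j ∈ range n, Y j ω} ≤ Real.exp (-ε ^ 2 / (2 * N)) := by
  rcases Nat.eq_zero_or_pos n with rfl | hn
  · simpa [not_le.2 hε] using (Real.exp_pos _).le
  have hsub : ∀ j < n, HasSubgaussianMGF (Y j) 1 P := fun j _ ↦ by
    convert hasSubgaussianMGF_of_mem_Icc_of_integral_eq_zero (hm j).aemeasurable
      (by filter_upwards [hbd j] with ω h using abs_le.1 h) (hmean j)
    ext; norm_num [← NNReal.coe_inj]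
  refine (HasSubgaussianMGF.measure_sum_range_ge_le_of_iIndepFun hind hsub hε.le).trans ?_
  have hn' : (0 : ℝ) < n := by exact_mod_cast hn
  rw [NNReal.coe_one, mul_one, Real.exp_le_exp, neg_div, neg_div, neg_le_neg_iff]
  gcongr

end Hoeffding

section PairWalk

variable {Ω : Type*} [MeasurableSpace Ω] {P : Measure Ω} [IsProbabilityMeasure P]
  {Y : ℕ → Ω → ℝ} (hind : iIndepFun Y P) (hm : ∀ i, Measurable (Y i))
  (hpm : ∀ i, ∀ᵐ ω ∂P, Y i ω = 1 ∨ Y i ω = -1) (hmean : ∀ i, P[Y i] = 0)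
include hind hm hpm hmean

lemma measure_pair_sum_ge_le {ε N : ℝ} (hε : 0 < ε) {n : ℕ} (hnN : (n : ℝ) ≤ N) :
    P {ω | ε ≤ ∑ j ∈ range n, Y (2 * j + 1) ω * Y (2 * j + 2) ω} ≤
        ENNReal.ofReal (Real.exp (-ε ^ 2 / (2 * N))) ∧
      P {ω | ε ≤ ∑ j ∈ range n, -(Y (2 * j + 1) ω * Y (2 * j + 2) ω)} ≤
        ENNReal.ofReal (Real.exp (-ε ^ 2 / (2 * N))) := by
  set W : ℕ → Ω → ℝ := fun j ω ↦ Y (2 * j + 1) ω * Y (2 * j + 2) ω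
  have hWm : ∀ j, Measurable (W j) := fun j ↦ (hm _).mul (hm _)
  have hWbd : ∀ j, ∀ᵐ ω ∂P, |W j ω| ≤ 1 := fun j ↦ by
    filter_upwards [hpm (2 * j + 1), hpm (2 * j + 2)] with ω h1 h2
    rcases h1 with h1 | h1 <;> rcases h2 with h2 | h2 <;> norm_num [W, h1, h2]
  have hWmean : ∀ j, P[W j] = 0 := fun j ↦ by
    rw [show W j = Y (2 * j + 1) * Y (2 * j + 2) from rfl,
      (hind.indepFun (by omega)).integral_mul_eq_mul_integral (hm _).aestronglyMeasurable
        (hm _).aestronglyMeasurable, hmean, zero_mul]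
  constructor <;> rw [← ofReal_measureReal] <;> refine ENNReal.ofReal_le_ofReal ?_
  · exact measureReal_sum_range_ge_le (hind.pair_mul hm) hWm hWbd hWmean hε hnN
  · exact measureReal_sum_range_ge_le
      ((hind.pair_mul hm).comp (fun _ ↦ Neg.neg) fun _ ↦ measurable_neg)
      (fun j ↦ (hWm j).neg) (fun j ↦ by simpa only [Function.comp_apply, abs_neg] using hWbd j)
      (fun j ↦ (integral_neg (W j)).trans (by rw [hWmean, neg_zero])) hε hnN

theorem measure_hit_deviation_le {s : ℕ → Ω → ℝ} {t : ℕ → Ω → ℕ}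
    (hs : ∀ n ω, s (n + 1) ω = s n ω + Y (n + 1) ω) (ht0 : ∀ ω, t 0 ω = 0)
    (ht : ∀ k ω, t (k + 1) ω = sInf {n | t k ω < n ∧ |s n ω - s (t k ω) ω| = 2})
    {Q r : ℝ} (hQ : 0 ≤ Q) (hr : 1 ≤ r) :
    P {ω | ∃ k : ℕ, (k : ℝ) ≤ Q ∧ 2 * r ≤ |(t k ω : ℝ) - 4 * k|} ≤
      ENNReal.ofReal (2 * Q * Real.exp (-(⌊r⌋₊ : ℝ) ^ 2 / (2 * (2 * Q + r)))) := by
  set F := ⌊r⌋₊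
  set e := Real.exp (-(F : ℝ) ^ 2 / (2 * (2 * Q + r)))
  have hF : (0 : ℝ) < F := by
    have : 1 ≤ F := Nat.le_floor (by exact_mod_cast hr)
    exact_mod_cast this
  have hFr : (F : ℝ) ≤ r := Nat.floor_le (by linarith)
  set A : ℕ → Set Ω := fun k ↦
    {ω | (F : ℝ) ≤ ∑ j ∈ range (2 * k + F - 1), -(Y (2 * j + 1) ω * Y (2 * j + 2) ω)}
  set B : ℕ → Set Ω := fun k ↦
    {ω | (F : ℝ) ≤ ∑ j ∈ range (2 * k - F), Y (2 * j + 1) ω * Y (2 * j + 2) ω}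
  have htail : ∀ k ∈ Icc 1 ⌊Q⌋₊, P (A k ∪ B k) ≤ 2 * ENNReal.ofReal e := by
    intro k hk
    obtain ⟨hk1, hkQ⟩ := mem_Icc.1 hk
    have hkQ' : (k : ℝ) ≤ Q := (Nat.le_floor_iff hQ).1 hkQ
    have hA : ((2 * k + F - 1 : ℕ) : ℝ) ≤ 2 * Q + r := by
      rw [Nat.cast_sub (by omega)]; push_cast; linarith
    have hB : ((2 * k - F : ℕ) : ℝ) ≤ 2 * Q + r := by
      have : ((2 * k - F : ℕ) : ℝ) ≤ 2 * k := by exact_mod_cast Nat.sub_le _ _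
      linarith
    exact (measure_union_le _ _).trans ((add_le_add
      (measure_pair_sum_ge_le hind hm hpm hmean hF hA).2
      (measure_pair_sum_ge_le hind hm hpm hmean hF hB).1).trans_eq (two_mul _).symm)
  have hsub : {ω | ∃ k : ℕ, (k : ℝ) ≤ Q ∧ 2 * r ≤ |(t k ω : ℝ) - 4 * k|} ≤ᵐ[P]
      ⋃ k ∈ Icc 1 ⌊Q⌋₊, (A k ∪ B k) := by
    filter_upwards [ae_all_iff.2 hpm] with ω hω ⟨k, hkQ, hdev⟩
    have hk : 1 ≤ k := Nat.one_le_iff_ne_zero.2 fun hk0 ↦ by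
      subst hk0
      simp only [ht0, CharP.cast_eq_zero, mul_zero, sub_zero, abs_zero] at hdev
      linarith
    exact Set.mem_iUnion₂.2 ⟨k, mem_Icc.2 ⟨hk, Nat.le_floor hkQ⟩,
      pair_sum_ge_of_deviation (s := (s · ω)) (t := (t · ω)) hω (hs · ω) (ht0 ω) (ht · ω) hk
        (by linarith) hdev⟩
  calc P _ ≤ P (⋃ k ∈ Icc 1 ⌊Q⌋₊, (A k ∪ B k)) := measure_mono_ae hsub
    _ ≤ ∑ k ∈ Icc 1 ⌊Q⌋₊, 2 * ENNReal.ofReal e :=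
        (measure_biUnion_finset_le _ _).trans (sum_le_sum htail)
    _ = ENNReal.ofReal (⌊Q⌋₊ * (2 * e)) := by
        rw [sum_const, Nat.card_Icc, Nat.add_sub_cancel, nsmul_eq_mul,
          ENNReal.ofReal_mul (by positivity), ENNReal.ofReal_mul (by norm_num),
          ENNReal.ofReal_natCast, ENNReal.ofReal_ofNat]
    _ ≤ _ := by
        rw [← mul_assoc, mul_comm (⌊Q⌋₊ : ℝ)]
        gcongr
        exact Nat.floor_le hQ

end PairWalk

lemma log_mul_four_pow_le {K : ℝ} (hK : 0 < K) (m : ℕ) :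
    Real.log (K * 4 ^ m) ≤ logStar K * (1 + 7 / 5 * m) := by
  have hlog4 : Real.log 4 < 7 / 5 := by
    rw [show (4 : ℝ) = 2 ^ 2 by norm_num, Real.log_pow]
    linarith [Real.log_two_lt_d9]
  have hL : 1 ≤ logStar K := le_max_left _ _
  have hlogK : Real.log K ≤ logStar K := le_max_right _ _
  rw [Real.log_mul hK.ne' (by positivity), Real.log_pow]
  nlinarith

lemma exp_neg_sq_div_le_rpow_neg {Q r L C m ε : ℝ} (hQ : 0 < Q) (hC : 0 < C) (hL : 1 ≤ L)
    (hm : 20 ≤ m) (hlog : Real.log Q ≤ L * (1 + 7 / 5 * m)) (hr2 : r ^ 2 = 6 * C * L * m * Q)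
    (hr : 100 ≤ r) (hrQ : 100 * r ≤ Q) (hε : r - 1 ≤ ε) :
    Real.exp (-ε ^ 2 / (2 * (2 * Q + r))) ≤ Q ^ (-C) := by
  rw [Real.rpow_def_of_pos hQ, Real.exp_le_exp, div_le_iff₀ (by linarith)]
  suffices Real.log Q * C * (2 * (2 * Q + r)) ≤ ε ^ 2 by linarith
  have hε2 : 49 / 50 * r ^ 2 ≤ ε ^ 2 := by nlinarith
  have hscalar : 201 / 50 * (1 + 7 / 5 * m) ≤ 49 / 50 * 6 * m := by linarith
  have hN : 2 * (2 * Q + r) ≤ 201 / 50 * Q := by linarith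
  calc Real.log Q * C * (2 * (2 * Q + r)) ≤ L * (1 + 7 / 5 * m) * C * (201 / 50 * Q) :=
        mul_le_mul (mul_le_mul_of_nonneg_right hlog hC.le) hN (by linarith)
          (mul_nonneg (mul_nonneg (by linarith) (by linarith)) hC.le)
    _ = C * L * Q * (201 / 50 * (1 + 7 / 5 * m)) := by ring
    _ ≤ C * L * Q * (49 / 50 * 6 * m) := by gcongr
    _ = 49 / 50 * r ^ 2 := by rw [hr2]; ring
    _ ≤ ε ^ 2 := hε2

lemma eventually_threshold_bounds {K c : ℝ} (hK : 0 < K) (hc : 0 < c) :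
    ∀ᶠ m : ℕ in atTop, 20 ≤ m ∧ 100 ≤ 2 * (c * √m) * 2 ^ m ∧
      100 * (2 * (c * √m) * 2 ^ m) ≤ K * 4 ^ m := by
  have hpow : Tendsto (fun m : ℕ ↦ (2 : ℝ) ^ m) atTop atTop :=
    tendsto_pow_atTop_atTop_of_one_lt one_lt_two
  have hratio : Tendsto (fun m : ℕ ↦ (m : ℝ) ^ 1 / 2 ^ m) atTop (nhds 0) :=
    tendsto_pow_const_div_const_pow_of_one_lt 1 one_lt_two
  filter_upwards [eventually_ge_atTop 20, hpow.eventually_ge_atTop (50 / c),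
    hratio.eventually (ge_mem_nhds (show 0 < K / (200 * c) by positivity))]
    with m hm h2m hmratio
  have hm1 : (1 : ℝ) ≤ m := by exact_mod_cast (show 1 ≤ m by omega)
  have hsqrt : 1 ≤ √(m : ℝ) ∧ √(m : ℝ) ≤ m :=
    ⟨Real.one_le_sqrt.2 hm1, Real.sqrt_le_iff.2 ⟨by linarith, by nlinarith⟩⟩
  have h2pos : (0 : ℝ) < 2 ^ m := by positivity
  rw [pow_one, div_le_div_iff₀ h2pos (by positivity)] at hmratio
  rw [div_le_iff₀ hc] at h2m
  refine ⟨hm, by nlinarith, ?_⟩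
  rw [show (4 : ℝ) ^ m = 2 ^ m * 2 ^ m by rw [← mul_pow]; norm_num]
  nlinarith

lemma two_zpow_neg_two_mul (n : ℕ) : (2 : ℝ) ^ (-(2 * (n : ℤ))) = ((4 : ℝ) ^ n)⁻¹ := by
  rw [zpow_neg, zpow_mul, zpow_natCast]; norm_num

lemma mul_two_zpow_le_iff {v K : ℝ} {m : ℕ} :
    v * (2 : ℝ) ^ (-(2 * (m : ℤ))) ≤ K ↔ v ≤ K * 4 ^ m := by
  rw [two_zpow_neg_two_mul, ← div_eq_mul_inv, div_le_iff₀ (by positivity)]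

lemma le_abs_sub_two_zpow_iff {a u v : ℝ} {m : ℕ} :
    a * (2 : ℝ) ^ (-(m : ℤ)) ≤
        |u * (2 : ℝ) ^ (-(2 * ((m : ℤ) + 1))) - v * (2 : ℝ) ^ (-(2 * (m : ℤ)))| ↔
      2 * (2 * a * 2 ^ m) ≤ |u - 4 * v| := by
  have h4 : (4 : ℝ) ^ (m + 1) = 4 * 2 ^ m * 2 ^ m := by
    rw [pow_succ, show (4 : ℝ) = 2 * 2 by norm_num, mul_pow]; ring
  have hsplit : u * ((4 : ℝ) ^ (m + 1))⁻¹ - v * ((4 : ℝ) ^ m)⁻¹ = (u - 4 * v) / 4 ^ (m + 1) := by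
    rw [pow_succ]; field_simp
  rw [show -(2 * ((m : ℤ) + 1)) = -(2 * ((m + 1 : ℕ) : ℤ)) by push_cast; ring,
    two_zpow_neg_two_mul, two_zpow_neg_two_mul, hsplit, abs_div,
    abs_of_pos (by positivity : (0 : ℝ) < 4 ^ (m + 1)), le_div_iff₀ (by positivity), zpow_neg,
    zpow_natCast, h4, show a * ((2 : ℝ) ^ m)⁻¹ * (4 * 2 ^ m * 2 ^ m) = 2 * (2 * a * 2 ^ m) by
      field_simp; ring]

lemma eventually_two_mul_exp_le {K C : ℝ} (hK : 0 < K) (hC : 1 < C) :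
    ∀ᶠ m : ℕ in atTop, ∀ r : ℝ, r = 2 * (√((3 / 2) * C * K * logStar K) * √m) * 2 ^ m →
      1 ≤ r ∧ 2 * (K * 4 ^ m) * Real.exp (-(⌊r⌋₊ : ℝ) ^ 2 / (2 * (2 * (K * 4 ^ m) + r))) ≤
        2 * (K * 2 ^ (2 * m)) ^ (1 - C) := by
  have hL : 1 ≤ logStar K := le_max_left _ _
  set c := √((3 / 2) * C * K * logStar K)
  filter_upwards [eventually_threshold_bounds hK (c := c) (by positivity)]
    with m ⟨hm20, hr, hrQ⟩ r hrdef
  have hQ : 0 < K * 4 ^ m := by positivity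
  have hr2 : r ^ 2 = 6 * C * logStar K * m * (K * 4 ^ m) := by
    rw [hrdef, show (4 : ℝ) ^ m = (2 ^ m) ^ 2 by rw [← pow_mul, mul_comm, pow_mul]; norm_num]
    simp only [c, mul_pow, Real.sq_sqrt (by positivity : (0 : ℝ) ≤ (3 / 2) * C * K * logStar K),
      Real.sq_sqrt (m.cast_nonneg : (0 : ℝ) ≤ m)]
    ring
  rw [← hrdef] at hr hrQ
  have hexp := exp_neg_sq_div_le_rpow_neg hQ (by linarith) hL (by exact_mod_cast hm20)
    (log_mul_four_pow_le hK m) hr2 hr hrQ (Nat.sub_one_lt_floor r).le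
  refine ⟨by linarith, ?_⟩
  rw [pow_mul, show ((2 : ℝ) ^ 2) = 4 by norm_num, sub_eq_add_neg, Real.rpow_add hQ,
    Real.rpow_one]
  linarith [mul_le_mul_of_nonneg_left hexp hQ.le]

/-- Let `{X_m(k) : m ≥ 0, k ≥ 1}` be an array of i.i.d. random variables with
`P(X_m(k)=1)=P(X_m(k)=−1)=1/2`, `S_m(n)=Σ_{k=1}^n X_m(k)`, and stopping times `T_m(0)=0`,
`T_m(k+1)=min{n > T_m(k) : |S_m(n)−S_m(T_m(k))|=2}`.  Then for any `K > 0` and `C > 1`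
there exists `m₀(C)` such that for all `m ≥ m₀(C)`:
`P( max_{0 ≤ k 2^{-2m} ≤ K} |T_{m+1}(k) 2^{-2(m+1)} − k 2^{-2m}|
    ≥ ((3/2) C K log_* K)^{1/2} m^{1/2} 2^{-m} ) ≤ 2 (K 2^{2m})^{1−C}`. -/
theorem statement1 {Ω : Type*} [MeasurableSpace Ω] (P : Measure Ω) [IsProbabilityMeasure P]
    (X : ℕ → ℕ → Ω → ℝ)
    (hmeas : ∀ m k, Measurable (X m k))
    (hindep : iIndepFun (fun p : ℕ × ℕ => X p.1 p.2) P)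
    (hdist : ∀ m k, P {ω | X m k ω = 1} = 1/2 ∧ P {ω | X m k ω = -1} = 1/2)
    (S : ℕ → ℕ → Ω → ℝ)
    (hS : ∀ m n ω, S m n ω = ∑ k ∈ Finset.range n, X m (k+1) ω)
    (T : ℕ → ℕ → Ω → ℕ)
    (hT0 : ∀ m ω, T m 0 ω = 0)
    (hTsucc : ∀ m k ω, T m (k+1) ω =
      sInf {n : ℕ | T m k ω < n ∧ |S m n ω - S m (T m k ω) ω| = 2}) :
    ∀ K C : ℝ, 0 < K → 1 < C → ∃ m₀ : ℕ, ∀ m : ℕ, m₀ ≤ m →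
      P {ω | ∃ k : ℕ, (k : ℝ) * (2:ℝ)^(-(2*(m:ℤ))) ≤ K ∧
          ((3/2) * C * K * logStar K) ^ ((1:ℝ)/2) * (m : ℝ) ^ ((1:ℝ)/2) * (2:ℝ)^(-(m:ℤ))
            ≤ |(T (m+1) k ω : ℝ) * (2:ℝ)^(-(2*((m:ℤ)+1))) - (k : ℝ) * (2:ℝ)^(-(2*(m:ℤ)))|}
        ≤ ENNReal.ofReal (2 * (K * 2^(2*m)) ^ (1 - C)) := by
  intro K C hK hC
  obtain ⟨m₀, hm₀⟩ := eventually_atTop.1 (eventually_two_mul_exp_le hK hC)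
  refine ⟨m₀, fun m hm ↦ ?_⟩
  obtain ⟨hr, hbound⟩ := hm₀ m hm _ rfl
  simp_rw [mul_two_zpow_le_iff, le_abs_sub_two_zpow_iff, ← Real.sqrt_eq_rpow]
  exact (measure_hit_deviation_le (hindep.precomp (Prod.mk_right_injective (m + 1)))
    (hmeas (m + 1)) (fun i ↦ ae_eq_one_or_eq_neg_one (hmeas _ i) (hdist _ i).1 (hdist _ i).2)
    (fun i ↦ integral_eq_zero_of_rademacher (hmeas _ i) (hdist _ i).1 (hdist _ i).2)
    (fun n ω ↦ by rw [hS, hS, sum_range_succ]) (hT0 (m + 1)) (hTsucc (m + 1)) (by positivity)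
    hr).trans (ENNReal.ofReal_le_ofReal hbound)
end

section
/- Let H ∈ (0,1), m ≥ 0 an integer, Δt = 2^{-2m}, t_x = x Δt, and let (ξ_r)_{r ∈ ℤ} be i.i.d. random variables with P(ξ_r = ±1) = 1/2. Define B_m^{(H)}(t_k) = (2^{-2Hm}/Γ(H+1/2)) Σ_{r=−∞}^{k−1} [ (k−r)^{H−1/2} − (−r)_+^{H−1/2} ] ξ_{r+1} for integers k ≥ 0, with the convention 0^{H−1/2} = 0. Then B_m^{(H)} has stationary increments: for all nonnegative integers k_0 and k, B_m^{(H)}(t_{k_0} + t_k) − B_m^{(H)}(t_{k_0}) is equal in distribution to B_m^{(H)}(t_k). -/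
open MeasureTheory ProbabilityTheory Filter

/-- The kernel coefficient `(k−r)^{H−1/2} − (−r)_+^{H−1/2}` with the convention
`0^{H−1/2} = 0` (even for nonnegative exponents). -/
noncomputable def coefH (H : ℝ) (k r : ℤ) : ℝ :=
  (((k - r : ℤ) : ℝ) ^ (H - 1/2)) - (if r < 0 then ((-r : ℤ) : ℝ) ^ (H - 1/2) else 0)

section Aux

variable {Ω : Type*} [MeasurableSpace Ω] {P : Measure Ω} [IsProbabilityMeasure P]

open scoped ENNReal NNReal

/-- The law of a Rademacher random variable. -/
lemma rademacher_map_eq {ξ : Ω → ℝ} (hm : Measurable ξ)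
    (h1 : P {ω | ξ ω = 1} = 1/2) (h2 : P {ω | ξ ω = -1} = 1/2) :
    Measure.map ξ P
      = (1/2 : ℝ≥0∞) • Measure.dirac (1:ℝ) + (1/2 : ℝ≥0∞) • Measure.dirac (-1:ℝ) := by
  classical
  set u : Set Ω := {ω | ξ ω = 1} with hu_def
  set v : Set Ω := {ω | ξ ω = -1} with hv_def
  have hu : MeasurableSet u := hm (measurableSet_singleton (1:ℝ))
  have hv : MeasurableSet v := hm (measurableSet_singleton (-1:ℝ))
  have hdisj : Disjoint u v := by
    rw [Set.disjoint_left]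
    intro ω hω1 hω2
    simp only [hu_def, hv_def, Set.mem_setOf_eq] at hω1 hω2
    rw [hω1] at hω2; norm_num at hω2
  have huv : P (u ∪ v) = 1 := by
    rw [measure_union hdisj hv, h1, h2]
    rw [ENNReal.add_halves]
  have hcompl : P (u ∪ v)ᶜ = 0 := by
    rw [measure_compl (hu.union hv) (measure_ne_top _ _), huv, measure_univ, tsub_self]
  ext s hs
  rw [Measure.map_apply hm hs]
  set A : Set Ω := ξ ⁻¹' s with hA_def
  have hAm : MeasurableSet A := hm hs
  have hsplit : P A = P (A ∩ u) + P (A ∩ v) := by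
    have h0 : P (A \ (u ∪ v)) = 0 := measure_mono_null (fun x hx => hx.2) hcompl
    have := measure_inter_add_diff (μ := P) A (hu.union hv)
    rw [h0, add_zero] at this
    rw [← this, Set.inter_union_distrib_left]
    exact measure_union (hdisj.mono Set.inter_subset_right Set.inter_subset_right)
      (hAm.inter hv)
  have hAu : P (A ∩ u) = if (1:ℝ) ∈ s then 1/2 else 0 := by
    by_cases h1s : (1:ℝ) ∈ s
    · rw [if_pos h1s]
      have : A ∩ u = u := by
        apply Set.inter_eq_right.mpr
        intro ω hω
        simp only [hu_def, Set.mem_setOf_eq] at hω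
        simp only [hA_def, Set.mem_preimage, hω]; exact h1s
      rw [this, h1]
    · rw [if_neg h1s]
      have : A ∩ u = ∅ := by
        ext ω
        simp only [Set.mem_inter_iff, Set.mem_empty_iff_false, iff_false, not_and]
        intro hωA hωu
        simp only [hu_def, Set.mem_setOf_eq] at hωu
        simp only [hA_def, Set.mem_preimage, hωu] at hωA
        exact h1s hωA
      rw [this, measure_empty]
  have hAv : P (A ∩ v) = if (-1:ℝ) ∈ s then 1/2 else 0 := by
    by_cases h1s : (-1:ℝ) ∈ s
    · rw [if_pos h1s]
      have : A ∩ v = v := by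
        apply Set.inter_eq_right.mpr
        intro ω hω
        simp only [hv_def, Set.mem_setOf_eq] at hω
        simp only [hA_def, Set.mem_preimage, hω]; exact h1s
      rw [this, h2]
    · rw [if_neg h1s]
      have : A ∩ v = ∅ := by
        ext ω
        simp only [Set.mem_inter_iff, Set.mem_empty_iff_false, iff_false, not_and]
        intro hωA hωv
        simp only [hv_def, Set.mem_setOf_eq] at hωv
        simp only [hA_def, Set.mem_preimage, hωv] at hωA
        exact h1s hωA
      rw [this, measure_empty]
  rw [hsplit, hAu, hAv]
  rw [Measure.add_apply, Measure.smul_apply, Measure.smul_apply,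
    Measure.dirac_apply' _ hs, Measure.dirac_apply' _ hs, smul_eq_mul, smul_eq_mul,
    Set.indicator_apply, Set.indicator_apply]
  by_cases h1s : (1:ℝ) ∈ s <;> by_cases h2s : (-1:ℝ) ∈ s <;>
    simp [h1s, h2s]

/-- Weighted sums of an i.i.d. family are distribution-invariant under an index shift. -/
lemma identDistrib_shift {ξ : ℤ → Ω → ℝ} (hmeas : ∀ r, Measurable (ξ r))
    (hindep : iIndepFun ξ P)
    (hmarg : ∀ r, Measure.map (ξ r) P = Measure.map (ξ 0) P)
    (S : Finset ℤ) (g : ℤ → ℝ) (cc : ℝ) (d₁ d₂ : ℤ) :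
    IdentDistrib (fun ω => cc * ∑ s ∈ S, g s * ξ (s + d₁) ω)
      (fun ω => cc * ∑ s ∈ S, g s * ξ (s + d₂) ω) P P := by
  classical
  set ν : Measure ℝ := Measure.map (ξ 0) P with hν
  haveI : IsProbabilityMeasure ν := Measure.isProbabilityMeasure_map (hmeas 0).aemeasurable
  set V : ℤ → Ω → (S → ℝ) := fun d ω i => ξ (↑i + d) ω with hV
  have hVmeas : ∀ d, Measurable (V d) := fun d =>
    measurable_pi_lambda _ fun i => hmeas _
  have map_pi : ∀ d : ℤ, Measure.map (V d) P = Measure.pi (fun _ : S => ν) := by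
    intro d
    refine (Measure.pi_eq fun t ht => ?_).symm
    set t' : ℤ → Set ℝ := fun j => if h : j ∈ S then t ⟨j, h⟩ else Set.univ with ht'def
    have ht' : ∀ j, MeasurableSet (t' j) := by
      intro j
      simp only [ht'def]
      split
      · exact ht _
      · exact MeasurableSet.univ
    rw [Measure.map_apply (hVmeas d) (MeasurableSet.univ_pi ht)]
    have hpre : V d ⁻¹' (Set.pi Set.univ t) = ⋂ j ∈ S, (ξ (j + d) ⁻¹' (t' j)) := by
      ext ω
      simp only [Set.mem_preimage, Set.mem_pi, Set.mem_univ, forall_true_left, Set.mem_iInter,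
        hV]
      constructor
      · intro h j hj
        have := h ⟨j, hj⟩
        simpa only [ht'def, dif_pos hj] using this
      · intro h i
        have := h i.1 i.2
        simpa only [ht'def, dif_pos i.2] using this
    rw [hpre]
    set u : ℤ → Set Ω := fun j' => ξ j' ⁻¹' (t' (j' - d)) with hu
    have hset : (⋂ j ∈ S, ξ (j + d) ⁻¹' (t' j)) = ⋂ j' ∈ S.map (addRightEmbedding d), u j' := by
      ext ω
      simp only [Set.mem_iInter, Finset.mem_map, addRightEmbedding_apply]
      constructor
      · rintro h j' ⟨j, hj, rfl⟩
        simpa only [hu, add_sub_cancel_right] using h j hj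
      · intro h j hj
        have := h (j + d) ⟨j, hj, rfl⟩
        simpa only [hu, add_sub_cancel_right] using this
    rw [hset, hindep.meas_biInter (fun j' _ => ⟨t' (j' - d), ht' _, rfl⟩)]
    rw [Finset.prod_map]
    have : ∀ j ∈ S, P (u (addRightEmbedding d j)) = ν (t' j) := by
      intro j hj
      simp only [hu, addRightEmbedding_apply, add_sub_cancel_right]
      rw [← Measure.map_apply (hmeas (j + d)) (ht' j), hmarg (j + d)]
    rw [Finset.prod_congr rfl this, ← Finset.prod_coe_sort]
    exact Finset.prod_congr rfl fun i _ => by rw [ht'def]; simp only [dif_pos i.2]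
  have hident : IdentDistrib (V d₁) (V d₂) P P :=
    ⟨(hVmeas d₁).aemeasurable, (hVmeas d₂).aemeasurable, by rw [map_pi d₁, map_pi d₂]⟩
  set g' : (S → ℝ) → ℝ := fun v => cc * ∑ i : S, g ↑i * v i with hg'def
  have hg' : Measurable g' :=
    (Finset.measurable_sum _ fun i _ => (measurable_pi_apply i).const_mul _).const_mul cc
  have key := hident.comp hg'
  have e : ∀ d : ℤ, g' ∘ V d = fun ω => cc * ∑ s ∈ S, g s * ξ (s + d) ω := by
    intro d
    funext ω
    simp only [Function.comp_apply, hg'def, hV]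
    rw [Finset.sum_coe_sort S (fun s => g s * ξ (s + d) ω)]
  rw [e d₁, e d₂] at key
  exact key

/-- Almost sure limits of identically distributed sequences are identically distributed. -/
lemma identDistrib_of_tendsto {X Y : ℕ → Ω → ℝ} {X' Y' : Ω → ℝ}
    (hXm : ∀ n, Measurable (X n)) (hYm : ∀ n, Measurable (Y n))
    (hid : ∀ n, IdentDistrib (X n) (Y n) P P)
    (hX : ∀ᵐ ω ∂P, Tendsto (fun n => X n ω) atTop (nhds (X' ω)))
    (hY : ∀ᵐ ω ∂P, Tendsto (fun n => Y n ω) atTop (nhds (Y' ω))) :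
    IdentDistrib X' Y' P P := by
  have hX' : AEMeasurable X' P :=
    aemeasurable_of_tendsto_metrizable_ae _ (fun n => (hXm n).aemeasurable) hX
  have hY' : AEMeasurable Y' P :=
    aemeasurable_of_tendsto_metrizable_ae _ (fun n => (hYm n).aemeasurable) hY
  refine ⟨hX', hY', ?_⟩
  haveI : IsProbabilityMeasure (P.map X') := Measure.isProbabilityMeasure_map hX'
  apply ext_of_forall_lintegral_eq_of_IsFiniteMeasure
  intro f
  have hfm : Measurable fun x : ℝ => (f x : ℝ≥0∞) :=
    measurable_coe_nnreal_ennreal.comp f.continuous.measurable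
  rw [lintegral_map' hfm.aemeasurable hX', lintegral_map' hfm.aemeasurable hY']
  set c : ℝ≥0 := nndist f 0 with hc
  have hbound : ∀ (Z : Ω → ℝ), ∀ᵐ ω ∂P, (f (Z ω) : ℝ≥0∞) ≤ (c : ℝ≥0∞) := by
    intro Z
    filter_upwards with ω
    have h := BoundedContinuousFunction.nndist_coe_le_nndist (f := f) (g := 0) (Z ω)
    rw [BoundedContinuousFunction.coe_zero, Pi.zero_apply, NNReal.nndist_zero_eq_val'] at h
    exact_mod_cast h
  have hlim : ∀ (Z : ℕ → Ω → ℝ) (Z' : Ω → ℝ),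
      (∀ n, Measurable (Z n)) →
      (∀ᵐ ω ∂P, Tendsto (fun n => Z n ω) atTop (nhds (Z' ω))) →
      Tendsto (fun n => ∫⁻ ω, (f (Z n ω) : ℝ≥0∞) ∂P) atTop
        (nhds (∫⁻ ω, (f (Z' ω) : ℝ≥0∞) ∂P)) := by
    intro Z Z' hZm hZ
    apply tendsto_lintegral_of_dominated_convergence (fun _ => (c : ℝ≥0∞))
    · exact fun n => hfm.comp (hZm n)
    · exact fun n => hbound (Z n)
    · rw [lintegral_const, measure_univ, mul_one]; exact ENNReal.coe_ne_top
    · filter_upwards [hZ] with ω hω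
      exact (ENNReal.continuous_coe.tendsto _).comp ((f.continuous.tendsto _).comp hω)
  have limX := hlim X X' hXm hX
  have limY := hlim Y Y' hYm hY
  have heq : ∀ n, ∫⁻ ω, (f (X n ω) : ℝ≥0∞) ∂P = ∫⁻ ω, (f (Y n ω) : ℝ≥0∞) ∂P := by
    intro n
    rw [← lintegral_map' hfm.aemeasurable (hXm n).aemeasurable,
      ← lintegral_map' hfm.aemeasurable (hYm n).aemeasurable, (hid n).map_eq]
  simp_rw [heq] at limX
  exact tendsto_nhds_unique limX limY

end Aux

/-- Reindexing identity for the partial sums of the increment. -/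
lemma sum_reindex (H : ℝ) (k₀ k : ℕ) (n : ℕ) (f : ℤ → ℝ) :
    (∑ r ∈ Finset.Icc (-(n:ℤ)) ((↑(k₀+k):ℤ) - 1), coefH H (↑(k₀+k)) r * f (r+1))
      - ∑ r ∈ Finset.Icc (-(n:ℤ)) ((k₀:ℤ) - 1), coefH H k₀ r * f (r+1)
    = ∑ s ∈ Finset.Icc (-(n:ℤ) - k₀) ((k:ℤ) - 1), coefH H k s * f (s + ((k₀:ℤ) + 1)) := by
  classical
  set big : Finset ℤ := Finset.Icc (-(n:ℤ)) ((↑(k₀+k):ℤ) - 1) with hbig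
  set F : ℤ → ℝ := fun r => if r ≤ (k₀:ℤ) - 1 then coefH H k₀ r * f (r+1) else 0 with hF
  have hsmall : ∑ r ∈ Finset.Icc (-(n:ℤ)) ((k₀:ℤ) - 1), coefH H k₀ r * f (r+1)
      = ∑ r ∈ big, F r := by
    rw [show ∑ r ∈ Finset.Icc (-(n:ℤ)) ((k₀:ℤ) - 1), coefH H k₀ r * f (r+1)
        = ∑ r ∈ Finset.Icc (-(n:ℤ)) ((k₀:ℤ) - 1), F r from
      Finset.sum_congr rfl fun r hr => (if_pos (Finset.mem_Icc.mp hr).2).symm]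
    refine Finset.sum_subset (Finset.Icc_subset_Icc le_rfl (by push_cast; omega)) ?_
    intro r hrt hrs
    rw [hbig, Finset.mem_Icc] at hrt
    rw [Finset.mem_Icc, not_and, not_le] at hrs
    rw [hF]
    exact if_neg (by have := hrs hrt.1; omega)
  rw [hsmall, ← Finset.sum_sub_distrib]
  have hmap : big = (Finset.Icc (-(n:ℤ) - k₀) ((k:ℤ) - 1)).map (addRightEmbedding (k₀:ℤ)) := by
    rw [Finset.map_add_right_Icc, hbig]
    congr 1
    · ring
    · push_cast; ring
  rw [hmap, Finset.sum_map]
  refine Finset.sum_congr rfl fun s _ => ?_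
  simp only [addRightEmbedding_apply]
  rw [show s + (k₀:ℤ) + 1 = s + ((k₀:ℤ) + 1) from by ring]
  have c1 : (((↑(k₀+k):ℤ) - (s + k₀) : ℤ) : ℝ) = (((k:ℤ) - s : ℤ) : ℝ) := by push_cast; ring
  have c2 : (((k₀:ℤ) - (s + k₀) : ℤ) : ℝ) = ((-s : ℤ) : ℝ) := by push_cast; ring
  by_cases hs0 : s < 0
  · simp only [hF]
    rw [if_pos (by omega : s + (k₀:ℤ) ≤ (k₀:ℤ) - 1)]
    simp only [coefH]
    rw [if_pos hs0, c1, c2]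
    ring
  · simp only [hF]
    rw [if_neg (by omega : ¬ s + (k₀:ℤ) ≤ (k₀:ℤ) - 1)]
    simp only [coefH]
    rw [if_neg hs0, if_neg (by omega : ¬ s + (k₀:ℤ) < 0), c1]
    ring

/-- Let `H ∈ (0,1)`, `m ≥ 0`, `Δt = 2^{-2m}`, `t_x = x Δt`, and `(ξ_r)_{r∈ℤ}`
i.i.d. with `P(ξ_r = ±1) = 1/2`.  Define
`B_m^{(H)}(t_k) = (2^{-2Hm}/Γ(H+1/2)) Σ_{r=−∞}^{k−1} [ (k−r)^{H−1/2} − (−r)_+^{H−1/2} ] ξ_{r+1}`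
(the series converging almost surely, which is expressed by the hypothesis `hBH` giving
`BH k` as the a.s. limit of the partial sums `Σ_{r=−n}^{k−1}`).  Then `B_m^{(H)}` has
stationary increments: for all `k₀, k ≥ 0`,
`B_m^{(H)}(t_{k₀} + t_k) − B_m^{(H)}(t_{k₀})` is equal in distribution to `B_m^{(H)}(t_k)`
(note `t_{k₀} + t_k = t_{k₀+k}`). -/
theorem statement5 {Ω : Type*} [MeasurableSpace Ω] (P : Measure Ω) [IsProbabilityMeasure P]
    (H : ℝ) (hH0 : 0 < H) (hH1 : H < 1) (m : ℕ)
    (ξ : ℤ → Ω → ℝ)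
    (hmeas : ∀ r, Measurable (ξ r))
    (hindep : iIndepFun ξ P)
    (hdist : ∀ r, P {ω | ξ r ω = 1} = 1/2 ∧ P {ω | ξ r ω = -1} = 1/2)
    (BH : ℕ → Ω → ℝ)
    (hBH : ∀ k : ℕ, ∀ᵐ ω ∂P, Tendsto
      (fun n : ℕ => (2:ℝ) ^ (-(2*H*(m:ℝ))) / Real.Gamma (H + 1/2) *
        ∑ r ∈ Finset.Icc (-(n:ℤ)) ((k:ℤ) - 1), coefH H k r * ξ (r+1) ω)
      atTop (nhds (BH k ω))) :
    ∀ k₀ k : ℕ, IdentDistrib (fun ω => BH (k₀ + k) ω - BH k₀ ω) (BH k) P P := by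
  intro k₀ k
  have hmarg : ∀ r, Measure.map (ξ r) P = Measure.map (ξ 0) P := by
    intro r
    rw [rademacher_map_eq (hmeas r) (hdist r).1 (hdist r).2,
      rademacher_map_eq (hmeas 0) (hdist 0).1 (hdist 0).2]
  set cc : ℝ := (2:ℝ) ^ (-(2*H*(m:ℝ))) / Real.Gamma (H + 1/2) with hcc
  set X : ℕ → Ω → ℝ := fun n ω =>
    cc * ∑ s ∈ Finset.Icc (-(n:ℤ) - k₀) ((k:ℤ) - 1), coefH H k s * ξ (s + ((k₀:ℤ) + 1)) ω
    with hX
  set Y : ℕ → Ω → ℝ := fun n ω =>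
    cc * ∑ s ∈ Finset.Icc (-(n:ℤ) - k₀) ((k:ℤ) - 1), coefH H k s * ξ (s + 1) ω with hY
  refine identDistrib_of_tendsto (X := X) (Y := Y) ?_ ?_ ?_ ?_ ?_
  · exact fun n =>
      (Finset.measurable_sum _ fun s _ => (hmeas _).const_mul _).const_mul cc
  · exact fun n =>
      (Finset.measurable_sum _ fun s _ => (hmeas _).const_mul _).const_mul cc
  · intro n
    have := identDistrib_shift hmeas hindep hmarg
      (Finset.Icc (-(n:ℤ) - k₀) ((k:ℤ) - 1)) (coefH H k) cc ((k₀:ℤ) + 1) 1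
    exact this
  · filter_upwards [hBH (k₀ + k), hBH k₀] with ω h1 h2
    have h3 := h1.sub h2
    have heq : (fun n : ℕ =>
        (cc * ∑ r ∈ Finset.Icc (-(n:ℤ)) ((↑(k₀+k):ℤ) - 1), coefH H (↑(k₀+k)) r * ξ (r+1) ω)
          - cc * ∑ r ∈ Finset.Icc (-(n:ℤ)) ((k₀:ℤ) - 1), coefH H k₀ r * ξ (r+1) ω)
        = fun n => X n ω := by
      funext n
      rw [hX, ← mul_sub, sum_reindex H k₀ k n (fun t => ξ t ω)]
    rw [heq] at h3
    exact h3
  · filter_upwards [hBH k] with ω h1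
    have h2 := h1.comp (tendsto_add_atTop_nat k₀)
    have heq : ((fun n : ℕ =>
        cc * ∑ r ∈ Finset.Icc (-(n:ℤ)) ((k:ℤ) - 1), coefH H k r * ξ (r+1) ω)
          ∘ (fun n => n + k₀)) = fun n => Y n ω := by
      funext n
      simp only [Function.comp_apply, hY]
      congr 1
      have : (-(↑(n + k₀):ℤ)) = -(n:ℤ) - k₀ := by push_cast; ring
      rw [this]
    rw [heq] at h2
    exact h2
end

section
/- Let H ∈ (0,1), H ≠ 1/2, m ≥ 0 an integer, K > 0 with 2^{-2m} ≤ K, and write t_x = x 2^{-2m} with the convention 0^{H−1/2} = 0. Then max over integers k with 1 ≤ k ≤ K 2^{2m} of Σ_{r=0}^{k} | (t_k − t_{r−1})^{H−1/2} − (t_k − t_r)^{H−1/2} | is at most 3 · 2^{−2m(H−1/2)} if 0 < H < 1/2, and at most (2K)^{H−1/2} if 1/2 < H < 1. -/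
/-!
Write `a = H - 1/2` and `Δ = 2^{-2m}`. Since `t_k - t_r = (k - r) Δ`, the sum factors as
`Δ^a · Σ_{j=0}^{k} |(j+1)^a - j^a|` after reversing the order of summation, and the remaining
sum telescopes because `j ↦ j^a` is monotone. For `a > 0` it equals `(k+1)^a`, and
`(k+1) Δ ≤ 2K` gives the second bound. For `a < 0` the term `j = 0` is `|1 - 0^a| = 1` and the
terms `j ≥ 1` telescope to `1 - (k+1)^a`, so the sum is at most `2 ≤ 3`.
-/

open Finset

theorem sum_range_abs_sub_of_monotone {g : ℕ → ℝ} (hg : Monotone g) (n : ℕ) :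
    ∑ j ∈ range n, |g (j + 1) - g j| = g n - g 0 := by
  rw [← sum_range_sub]
  exact sum_congr rfl fun j _ => abs_of_nonneg (sub_nonneg.2 (hg j.le_succ))

theorem sum_range_abs_sub_of_antitone {g : ℕ → ℝ} (hg : Antitone g) (n : ℕ) :
    ∑ j ∈ range n, |g (j + 1) - g j| = g 0 - g n := by
  have h := sum_range_abs_sub_of_monotone (g := fun j => -g j) hg.neg n
  simp only [← neg_sub', abs_neg] at h
  linarith

theorem sum_range_abs_rpow_succ_sub_of_pos {a : ℝ} (ha : 0 < a) (n : ℕ) :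
    ∑ j ∈ range n, |((j : ℝ) + 1) ^ a - (j : ℝ) ^ a| = (n : ℝ) ^ a := by
  have hmono : Monotone fun j : ℕ => (j : ℝ) ^ a := fun i j hij =>
    Real.rpow_le_rpow (Nat.cast_nonneg i) (Nat.cast_le.2 hij) ha.le
  have h := sum_range_abs_sub_of_monotone hmono n
  simp only [Nat.cast_add, Nat.cast_one, Nat.cast_zero, Real.zero_rpow ha.ne', sub_zero] at h
  exact h

theorem sum_range_abs_rpow_succ_sub_of_neg {a : ℝ} (ha : a < 0) (n : ℕ) :
    ∑ j ∈ range (n + 1), |((j : ℝ) + 1) ^ a - (j : ℝ) ^ a| = 2 - ((n : ℝ) + 1) ^ a := by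
  have hanti : Antitone fun j : ℕ => ((j : ℝ) + 1) ^ a := fun i j hij =>
    Real.rpow_le_rpow_of_nonpos (by positivity) (by gcongr) ha.le
  have htail := sum_range_abs_sub_of_antitone hanti n
  simp only [Nat.cast_add, Nat.cast_one, Nat.cast_zero, zero_add, Real.one_rpow] at htail
  rw [sum_range_succ']
  simp only [Nat.cast_add, Nat.cast_one, Nat.cast_zero, zero_add, Real.one_rpow,
    Real.zero_rpow ha.ne, sub_zero, abs_one, htail]
  ring

theorem sum_range_abs_rpow_sub_mul_eq {c : ℝ} (hc : 0 ≤ c) (a : ℝ) (k : ℕ) :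
    ∑ r ∈ range (k + 1), |(((k : ℝ) - r + 1) * c) ^ a - (((k : ℝ) - r) * c) ^ a|
      = c ^ a * ∑ j ∈ range (k + 1), |((j : ℝ) + 1) ^ a - (j : ℝ) ^ a| := by
  rw [← sum_range_reflect, mul_sum]
  refine sum_congr rfl fun r hr => ?_
  have hrk : r ≤ k := Nat.lt_succ_iff.1 (mem_range.1 hr)
  rw [Nat.add_sub_cancel, Nat.cast_sub hrk, sub_sub_cancel, Real.mul_rpow (by positivity) hc,
    Real.mul_rpow (by positivity) hc, ← sub_mul, abs_mul, abs_of_nonneg (Real.rpow_nonneg hc a),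
    mul_comm]

theorem two_zpow_neg_rpow (m : ℕ) (a : ℝ) :
    ((2 : ℝ) ^ (-(2 * (m : ℤ)))) ^ a = (2 : ℝ) ^ (-(2 * (m : ℝ)) * a) := by
  rw [← Real.rpow_intCast, ← Real.rpow_mul zero_le_two]
  push_cast
  rfl

theorem succ_mul_two_zpow_neg_le {m k : ℕ} {K : ℝ} (hΔK : (2 : ℝ) ^ (-(2 * (m : ℤ))) ≤ K)
    (hk : (k : ℝ) ≤ K * 2 ^ (2 * m)) :
    ((k : ℝ) + 1) * (2 : ℝ) ^ (-(2 * (m : ℤ))) ≤ 2 * K := by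
  have hinv : (2 : ℝ) ^ (2 * m) * (2 : ℝ) ^ (-(2 * (m : ℤ))) = 1 := by
    rw [← zpow_natCast, ← zpow_add₀ two_ne_zero]
    simp
  have hkΔ : (k : ℝ) * (2 : ℝ) ^ (-(2 * (m : ℤ))) ≤ K := by
    calc (k : ℝ) * (2 : ℝ) ^ (-(2 * (m : ℤ)))
        ≤ K * 2 ^ (2 * m) * (2 : ℝ) ^ (-(2 * (m : ℤ))) := by gcongr
      _ = K := by rw [mul_assoc, hinv, mul_one]
  linarith

theorem statement15_general (H : ℝ)
    (m : ℕ) (K : ℝ) (hΔK : (2:ℝ)^(-(2*(m:ℤ))) ≤ K) :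
    (H < 1/2 → ∀ k : ℕ, 1 ≤ k → (k : ℝ) ≤ K * 2^(2*m) →
      ∑ r ∈ Finset.range (k+1),
        |(((k : ℝ) - r + 1) * (2:ℝ)^(-(2*(m:ℤ)))) ^ (H - 1/2)
          - (((k : ℝ) - r) * (2:ℝ)^(-(2*(m:ℤ)))) ^ (H - 1/2)|
        ≤ 3 * (2:ℝ) ^ (-(2*(m:ℝ)) * (H - 1/2))) ∧
    (1/2 < H → ∀ k : ℕ, 1 ≤ k → (k : ℝ) ≤ K * 2^(2*m) →
      ∑ r ∈ Finset.range (k+1),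
        |(((k : ℝ) - r + 1) * (2:ℝ)^(-(2*(m:ℤ)))) ^ (H - 1/2)
          - (((k : ℝ) - r) * (2:ℝ)^(-(2*(m:ℤ)))) ^ (H - 1/2)|
        ≤ (2*K) ^ (H - 1/2)) := by
  have hΔ : (0 : ℝ) ≤ (2 : ℝ) ^ (-(2 * (m : ℤ))) := by positivity
  refine ⟨fun hH k _ _ => ?_, fun hH k _ hk => ?_⟩
  · have ha : H - 1/2 < 0 := by linarith
    rw [sum_range_abs_rpow_sub_mul_eq hΔ, sum_range_abs_rpow_succ_sub_of_neg ha,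
      ← two_zpow_neg_rpow]
    have hpos : 0 < ((k : ℝ) + 1) ^ (H - 1/2) := by positivity
    have hΔa : 0 ≤ ((2 : ℝ) ^ (-(2 * (m : ℤ)))) ^ (H - 1/2) := by positivity
    nlinarith
  · have ha : 0 < H - 1/2 := by linarith
    rw [sum_range_abs_rpow_sub_mul_eq hΔ, sum_range_abs_rpow_succ_sub_of_pos ha, mul_comm,
      Nat.cast_succ, ← Real.mul_rpow (by positivity) hΔ]
    exact Real.rpow_le_rpow (by positivity) (succ_mul_two_zpow_neg_le hΔK hk) ha.le

/-- Let `H ∈ (0,1)`, `H ≠ 1/2`, `m ≥ 0`, `K > 0` with `2^{-2m} ≤ K`, and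
`t_x = x 2^{-2m}`, with the convention `0^{H−1/2} = 0` (automatic for `Real.rpow` since
`H − 1/2 ≠ 0`).  Then the maximum over integers `k` with `1 ≤ k ≤ K 2^{2m}` of
`Σ_{r=0}^{k} | (t_k − t_{r−1})^{H−1/2} − (t_k − t_r)^{H−1/2} |` is at most
`3 · 2^{−2m(H−1/2)}` if `0 < H < 1/2`, and at most `(2K)^{H−1/2}` if `1/2 < H < 1`. -/
theorem statement15 (H : ℝ) (hH0 : 0 < H) (hH1 : H < 1) (hHhalf : H ≠ 1/2)
    (m : ℕ) (K : ℝ) (hK : 0 < K) (hΔK : (2:ℝ)^(-(2*(m:ℤ))) ≤ K) :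
    (H < 1/2 → ∀ k : ℕ, 1 ≤ k → (k : ℝ) ≤ K * 2^(2*m) →
      ∑ r ∈ Finset.range (k+1),
        |(((k : ℝ) - r + 1) * (2:ℝ)^(-(2*(m:ℤ)))) ^ (H - 1/2)
          - (((k : ℝ) - r) * (2:ℝ)^(-(2*(m:ℤ)))) ^ (H - 1/2)|
        ≤ 3 * (2:ℝ) ^ (-(2*(m:ℝ)) * (H - 1/2))) ∧
    (1/2 < H → ∀ k : ℕ, 1 ≤ k → (k : ℝ) ≤ K * 2^(2*m) →
      ∑ r ∈ Finset.range (k+1),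
        |(((k : ℝ) - r + 1) * (2:ℝ)^(-(2*(m:ℤ)))) ^ (H - 1/2)
          - (((k : ℝ) - r) * (2:ℝ)^(-(2*(m:ℤ)))) ^ (H - 1/2)|
        ≤ (2*K) ^ (H - 1/2)) :=
  statement15_general H m K hΔK
end

section
/- Let H ∈ (0,1), H ≠ 1/2, m ≥ 0 an integer, K > 0 with Δt := 2^{-2m} ≤ K, L = 4K, and let k be an integer with 1 ≤ k ≤ K 2^{2m}. Then for every integer j ≥ 2: C_{m,k,j} := (Δt)^{H−1/2} Σ_{v=⌊(j−1)L 2^{2m}⌋+1}^{⌊ j L 2^{2m} ⌋} | (k+v+1)^{H−1/2} − (k+v)^{H−1/2} − (v+1)^{H−1/2} + v^{H−1/2} | ≤ a_H |H − 1/2| L^{H−1/2} j^{H−5/2}, where a_H = 5/2 if 0 < H < 1/2 and a_H = 5/3 if 1/2 < H < 1. -/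
/-!
Write `α = H - 1/2` and `X = L 2^{2m}`, so that `Δt^α X^α = L^α`, `X ≥ 4` and `k ≤ X/4`.
Two applications of the mean value theorem bound each summand by `|α| (1 - α) k v^{α-2}`.
For `j = 2` the sum of `(1 - α) v^{α-2}` over `(X, 2X]` telescopes against the differences of
`v^{α-1}` and is at most `⌊X⌋^{α-1} ≤ (8/5) X^{α-1}`; for `j ≥ 3` the sum of `v^{α-2}` is at most
`(X + 1) ((j - 1) X)^{α-2} ≤ (135/32) X^{α-1} j^{α-2}`. The constants `a_H` absorb the numerical
factors, the binding one being `2^{5/2} ≤ 25/4` at `H → 0`.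
-/

open Real Finset Set

namespace Real

lemma rpow_div_two_le_of_pow_le {x c : ℝ} (n : ℕ) (hx : 0 ≤ x) (hc : 0 ≤ c) (h : x ^ n ≤ c ^ 2) :
    x ^ ((n : ℝ) / 2) ≤ c := by
  rw [rpow_div_two_eq_sqrt _ hx, rpow_natCast]
  refine le_of_pow_le_pow_left₀ two_ne_zero hc ?_
  rwa [← pow_mul, mul_comm, pow_mul, sq_sqrt hx]

lemma abs_add_one_rpow_sub_rpow_le {β t : ℝ} (hβ : β ≤ 1) (ht : 0 < t) :
    |(t + 1) ^ β - t ^ β| ≤ |β| * t ^ (β - 1) := by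
  obtain ⟨c, ⟨htc, -⟩, hc⟩ := exists_hasDerivAt_eq_slope (fun s : ℝ => s ^ β)
    (fun s => β * s ^ (β - 1)) (lt_add_one t)
    (fun s hs => (continuousAt_rpow_const _ _ (Or.inl (ht.trans_le hs.1).ne')).continuousWithinAt)
    (fun s hs => hasDerivAt_rpow_const (Or.inl (ht.trans hs.1).ne'))
  rw [add_sub_cancel_left, div_one] at hc
  rw [← hc, abs_mul, abs_of_pos (rpow_pos_of_pos (ht.trans htc) _)]
  exact mul_le_mul_of_nonneg_left (rpow_le_rpow_of_nonpos ht htc.le (by linarith)) (abs_nonneg β)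

lemma abs_rpow_second_difference_le {α x δ : ℝ} (hα : α ≤ 1) (hx : 0 < x) (hδ : 0 ≤ δ) :
    |(x + δ + 1) ^ α - (x + δ) ^ α - (x + 1) ^ α + x ^ α| ≤ |α| * (1 - α) * δ * x ^ (α - 2) := by
  have hderiv : ∀ t ∈ Icc x (x + δ), HasDerivWithinAt (fun s : ℝ => (s + 1) ^ α - s ^ α)
      (α * (t + 1) ^ (α - 1) - α * t ^ (α - 1)) (Icc x (x + δ)) t := by
    intro t ht
    have ht0 : 0 < t := hx.trans_le ht.1
    exact (((hasDerivAt_rpow_const (Or.inl (by positivity))).comp_add_const t 1).sub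
      (hasDerivAt_rpow_const (Or.inl ht0.ne'))).hasDerivWithinAt
  have hbound : ∀ t ∈ Ico x (x + δ),
      ‖α * (t + 1) ^ (α - 1) - α * t ^ (α - 1)‖ ≤ |α| * (1 - α) * x ^ (α - 2) := by
    intro t ht
    have ht0 : 0 < t := hx.trans_le ht.1
    have h := abs_add_one_rpow_sub_rpow_le (β := α - 1) (by linarith) ht0
    rw [abs_of_nonpos (by linarith : α - 1 ≤ 0), neg_sub, sub_sub, one_add_one_eq_two] at h
    rw [Real.norm_eq_abs, ← mul_sub, abs_mul, mul_assoc]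
    refine mul_le_mul_of_nonneg_left (h.trans ?_) (abs_nonneg α)
    exact mul_le_mul_of_nonneg_left (rpow_le_rpow_of_nonpos hx ht.1 (by linarith)) (by linarith)
  have h := norm_image_sub_le_of_norm_deriv_le_segment' hderiv hbound (x + δ)
    ⟨by linarith, le_rfl⟩
  rw [Real.norm_eq_abs, add_sub_cancel_left] at h
  calc _ = |((x + δ + 1) ^ α - (x + δ) ^ α) - ((x + 1) ^ α - x ^ α)| := by ring_nf
    _ ≤ _ := h
    _ = _ := by ring

lemma one_sub_mul_rpow_sub_two_le {α y : ℝ} (hα : α ≤ 1) (hy : 1 < y) :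
    (1 - α) * y ^ (α - 2) ≤ (y - 1) ^ (α - 1) - y ^ (α - 1) := by
  have hy0 : 0 < y - 1 := by linarith
  obtain ⟨c, ⟨hc, hcy⟩, hslope⟩ := exists_hasDerivAt_eq_slope (fun s : ℝ => s ^ (α - 1))
    (fun s => (α - 1) * s ^ (α - 1 - 1)) (sub_one_lt y)
    (fun s hs => (continuousAt_rpow_const _ _ (Or.inl (hy0.trans_le hs.1).ne')).continuousWithinAt)
    (fun s hs => hasDerivAt_rpow_const (Or.inl (hy0.trans hs.1).ne'))
  rw [sub_sub_cancel, div_one, sub_sub, one_add_one_eq_two] at hslope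
  have hc0 : 0 < c := hy0.trans hc
  calc (1 - α) * y ^ (α - 2) ≤ (1 - α) * c ^ (α - 2) :=
        mul_le_mul_of_nonneg_left (rpow_le_rpow_of_nonpos hc0 hcy.le (by linarith)) (by linarith)
    _ = _ := by linear_combination -hslope

end Real

lemma one_sub_mul_sum_Ioc_rpow_sub_two_le {α : ℝ} (hα : α ≤ 1) {a : ℕ} (ha : 1 ≤ a) (b : ℕ) :
    (1 - α) * ∑ v ∈ Ioc a b, (v : ℝ) ^ (α - 2) ≤ (a : ℝ) ^ (α - 1) := by
  suffices h : ∀ b, a ≤ b →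
      (1 - α) * ∑ v ∈ Ioc a b, (v : ℝ) ^ (α - 2) ≤ (a : ℝ) ^ (α - 1) - (b : ℝ) ^ (α - 1) by
    rcases le_total a b with hab | hba
    · exact (h b hab).trans (sub_le_self _ (rpow_nonneg b.cast_nonneg _))
    · rw [Finset.Ioc_eq_empty (by omega), sum_empty, mul_zero]
      exact rpow_nonneg a.cast_nonneg _
  intro b hab
  induction b, hab using Nat.le_induction with
  | base => simp
  | succ n hn ih =>
    have hstep := one_sub_mul_rpow_sub_two_le hα
      (by exact_mod_cast (by omega : 1 < n + 1) : (1 : ℝ) < (n + 1 : ℕ))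
    rw [sum_Ioc_succ_top (by omega), mul_add]
    push_cast at hstep ⊢
    rw [add_sub_cancel_right] at hstep
    linarith

lemma sum_Ioc_floor_rpow_le {p A : ℝ} (hp : p ≤ 0) (hA : 0 < A) (b : ℕ) :
    ∑ v ∈ Ioc ⌊A⌋₊ b, (v : ℝ) ^ p ≤ ((b - ⌊A⌋₊ : ℕ) : ℝ) * A ^ p := by
  rw [← Nat.card_Ioc, ← nsmul_eq_mul]
  refine sum_le_card_nsmul _ _ _ fun v hv => rpow_le_rpow_of_nonpos hA ?_ hp
  exact (Nat.lt_floor_add_one A).le.trans (by exact_mod_cast (mem_Ioc.1 hv).1)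

lemma sum_abs_rpow_second_difference_le {α : ℝ} (hα : α ≤ 1) (k a b : ℕ) :
    ∑ v ∈ Ioc a b,
        |((k : ℝ) + v + 1) ^ α - ((k : ℝ) + v) ^ α - ((v : ℝ) + 1) ^ α + (v : ℝ) ^ α|
      ≤ |α| * k * ((1 - α) * ∑ v ∈ Ioc a b, (v : ℝ) ^ (α - 2)) := by
  rw [mul_sum, mul_sum]
  refine sum_le_sum fun v hv => ?_
  have hv0 : (0 : ℝ) < v := by exact_mod_cast (Nat.zero_le a).trans_lt (mem_Ioc.1 hv).1
  calc _ ≤ |α| * (1 - α) * k * (v : ℝ) ^ (α - 2) := by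
        simpa only [add_comm (v : ℝ)] using
          abs_rpow_second_difference_le hα hv0 k.cast_nonneg
    _ = _ := by ring

lemma one_sub_mul_sum_Ioc_floor_rpow_sub_two_le {α X : ℝ} (hα₀ : -1/2 ≤ α) (hα₁ : α ≤ 1)
    (hX : 4 ≤ X) (b : ℕ) :
    (1 - α) * ∑ v ∈ Ioc ⌊X⌋₊ b, (v : ℝ) ^ (α - 2) ≤ 8/5 * X ^ (α - 1) := by
  have ha : 3/4 * X ≤ ⌊X⌋₊ := by linarith [Nat.sub_one_lt_floor X]
  have hcoef : (3/4 : ℝ) ^ (α - 1) ≤ 8/5 := by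
    rw [← inv_inv (3/4 : ℝ), inv_rpow (by norm_num), ← rpow_neg (by norm_num), neg_sub]
    calc (3/4 : ℝ)⁻¹ ^ (1 - α) ≤ (3/4 : ℝ)⁻¹ ^ ((3 : ℕ) / 2 : ℝ) :=
          rpow_le_rpow_of_exponent_le (by norm_num) (by push_cast; linarith)
      _ ≤ 8/5 := rpow_div_two_le_of_pow_le 3 (by norm_num) (by norm_num) (by norm_num)
  calc _ ≤ (⌊X⌋₊ : ℝ) ^ (α - 1) :=
        one_sub_mul_sum_Ioc_rpow_sub_two_le hα₁ (Nat.le_floor (by norm_num; linarith)) b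
    _ ≤ (3/4 * X) ^ (α - 1) := rpow_le_rpow_of_nonpos (by positivity) ha (by linarith)
    _ = (3/4 : ℝ) ^ (α - 1) * X ^ (α - 1) := mul_rpow (by norm_num) (by positivity)
    _ ≤ 8/5 * X ^ (α - 1) := mul_le_mul_of_nonneg_right hcoef (by positivity)

lemma sum_Ioc_floor_rpow_sub_two_le {α X t : ℝ} (hα₀ : -1 ≤ α) (hα₁ : α ≤ 2) (hX : 4 ≤ X)
    (ht : 3 ≤ t) :
    ∑ v ∈ Ioc ⌊(t - 1) * X⌋₊ ⌊t * X⌋₊, (v : ℝ) ^ (α - 2) ≤ 135/32 * X ^ (α - 1) * t ^ (α - 2) := by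
  have hX0 : 0 < X := by linarith
  have hcard : ((⌊t * X⌋₊ - ⌊(t - 1) * X⌋₊ : ℕ) : ℝ) ≤ 5/4 * X := by
    have hle : ⌊(t - 1) * X⌋₊ ≤ ⌊t * X⌋₊ := Nat.floor_mono (by nlinarith)
    rw [Nat.cast_sub hle]
    linarith [Nat.floor_le (by positivity : 0 ≤ t * X), Nat.sub_one_lt_floor ((t - 1) * X)]
  have hcoef : (2/3 : ℝ) ^ (α - 2) ≤ 27/8 := by
    rw [← inv_inv (2/3 : ℝ), inv_rpow (by norm_num), ← rpow_neg (by norm_num), neg_sub]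
    calc (2/3 : ℝ)⁻¹ ^ (2 - α) ≤ (2/3 : ℝ)⁻¹ ^ (3 : ℝ) :=
          rpow_le_rpow_of_exponent_le (by norm_num) (by linarith)
      _ = 27/8 := by norm_num
  have hpow : ((t - 1) * X) ^ (α - 2) ≤ 27/8 * t ^ (α - 2) * X ^ (α - 2) := by
    calc ((t - 1) * X) ^ (α - 2) ≤ (2/3 * t * X) ^ (α - 2) :=
          rpow_le_rpow_of_nonpos (by positivity) (by nlinarith) (by linarith)
      _ = (2/3 : ℝ) ^ (α - 2) * t ^ (α - 2) * X ^ (α - 2) := by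
          rw [mul_rpow (by positivity) hX0.le, mul_rpow (by norm_num) (by positivity)]
      _ ≤ 27/8 * t ^ (α - 2) * X ^ (α - 2) := by gcongr
  calc _ ≤ ((⌊t * X⌋₊ - ⌊(t - 1) * X⌋₊ : ℕ) : ℝ) * ((t - 1) * X) ^ (α - 2) :=
        sum_Ioc_floor_rpow_le (by linarith) (by nlinarith) _
    _ ≤ 5/4 * X * (27/8 * t ^ (α - 2) * X ^ (α - 2)) :=
        mul_le_mul hcard hpow (rpow_nonneg (by nlinarith) _) (by positivity)
    _ = 135/32 * (X * X ^ (α - 2)) * t ^ (α - 2) := by ring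
    _ = 135/32 * X ^ (α - 1) * t ^ (α - 2) := by
        rw [show α - 1 = 1 + (α - 2) by ring, rpow_add hX0, rpow_one]

lemma two_fifths_le_mul_two_rpow {α : ℝ} (hα : -1/2 ≤ α) :
    2/5 ≤ (if α < 0 then (5:ℝ)/2 else 5/3) * 2 ^ (α - 2) := by
  split_ifs with hneg
  · have h : (2:ℝ) ^ (2 - α) ≤ 25/4 :=
      (rpow_le_rpow_of_exponent_le one_le_two (by push_cast; linarith) :
        (2:ℝ) ^ (2 - α) ≤ 2 ^ ((5 : ℕ) / 2 : ℝ)).trans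
        (rpow_div_two_le_of_pow_le 5 zero_le_two (by norm_num) (by norm_num))
    rw [show α - 2 = -(2 - α) by ring, rpow_neg zero_le_two, ← div_eq_mul_inv,
      le_div_iff₀ (by positivity)]
    linarith
  · calc (2/5 : ℝ) ≤ 5/3 * 2 ^ (-2 : ℝ) := by norm_num
      _ ≤ 5/3 * 2 ^ (α - 2) := by
        gcongr
        exacts [one_le_two, by linarith]

lemma sum_abs_rpow_second_difference_window_le {α X : ℝ} (hα₀ : -1/2 ≤ α) (hα₁ : α ≤ 1)
    (hX : 4 ≤ X) {k j : ℕ} (hk : (k : ℝ) ≤ X / 4) (hj : 2 ≤ j) :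
    ∑ v ∈ Ioc ⌊((j : ℝ) - 1) * X⌋₊ ⌊(j : ℝ) * X⌋₊,
        |((k : ℝ) + v + 1) ^ α - ((k : ℝ) + v) ^ α - ((v : ℝ) + 1) ^ α + (v : ℝ) ^ α|
      ≤ (if α < 0 then (5:ℝ)/2 else 5/3) * |α| * X ^ α * (j : ℝ) ^ (α - 2) := by
  have hX0 : 0 < X := by linarith
  have hXα : X * X ^ (α - 1) = X ^ α := by rw [rpow_sub_one hX0.ne', mul_div_cancel₀ _ hX0.ne']
  rcases hj.eq_or_lt with rfl | hj₃
  · calc _ ≤ |α| * k * ((1 - α) * ∑ v ∈ Ioc ⌊X⌋₊ ⌊2 * X⌋₊, (v : ℝ) ^ (α - 2)) := by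
          simpa only [Nat.cast_ofNat, show (2 : ℝ) - 1 = 1 by norm_num, one_mul] using
            sum_abs_rpow_second_difference_le hα₁ k _ _
      _ ≤ |α| * (X / 4) * (8/5 * X ^ (α - 1)) := by
          gcongr |α| * ?_ * ?_
          exact one_sub_mul_sum_Ioc_floor_rpow_sub_two_le hα₀ hα₁ hX _
      _ = 2/5 * (|α| * X ^ α) := by rw [← hXα]; ring
      _ ≤ _ := by
          rw [Nat.cast_ofNat, mul_right_comm _ (X ^ α), mul_right_comm _ |α|, mul_assoc]
          exact mul_le_mul_of_nonneg_right (two_fifths_le_mul_two_rpow hα₀) (by positivity)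
  · have hj₃' : (3 : ℝ) ≤ j := by exact_mod_cast hj₃
    calc _ ≤ |α| * k * ((1 - α) * ∑ v ∈ Ioc ⌊((j : ℝ) - 1) * X⌋₊ ⌊(j : ℝ) * X⌋₊,
              (v : ℝ) ^ (α - 2)) := sum_abs_rpow_second_difference_le hα₁ k _ _
      _ ≤ |α| * (X / 4) * ((1 - α) * (135/32 * X ^ (α - 1) * (j : ℝ) ^ (α - 2))) := by
          gcongr |α| * ?_ * ((1 - α) * ?_)
          exact sum_Ioc_floor_rpow_sub_two_le (by linarith) (by linarith) hX hj₃'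
      _ = 135/128 * (1 - α) * |α| * X ^ α * (j : ℝ) ^ (α - 2) := by rw [← hXα]; ring
      _ ≤ _ := by
          gcongr
          split_ifs <;> linarith

theorem statement16_general (H : ℝ) (hH0 : 0 < H) (hH1 : H < 1)
    (m : ℕ) (K : ℝ) (hΔK : (2:ℝ)^(-(2*(m:ℤ))) ≤ K)
    (L : ℝ) (hL : L = 4*K)
    (k : ℕ) (hkK : (k : ℝ) ≤ K * 2^(2*m))
    (j : ℕ) (hj : 2 ≤ j) :
    ((2:ℝ)^(-(2*(m:ℤ)))) ^ (H - 1/2) *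
      ∑ v ∈ Finset.Ioc ⌊((j:ℝ) - 1) * L * 2^(2*m)⌋₊ ⌊(j:ℝ) * L * 2^(2*m)⌋₊,
        |((k : ℝ) + v + 1) ^ (H - 1/2) - ((k : ℝ) + v) ^ (H - 1/2)
          - ((v : ℝ) + 1) ^ (H - 1/2) + (v : ℝ) ^ (H - 1/2)|
      ≤ (if H < 1/2 then (5:ℝ)/2 else 5/3) * |H - 1/2| * L ^ (H - 1/2) * (j : ℝ) ^ (H - 5/2) := by
  have hΔ : (2:ℝ) ^ (-(2 * (m:ℤ))) = ((2:ℝ) ^ (2 * m))⁻¹ := by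
    rw [zpow_neg, ← zpow_natCast]; push_cast; rfl
  have hP : (0:ℝ) < 2 ^ (2 * m) := by positivity
  have hX : 4 ≤ L * 2 ^ (2 * m) := by
    rw [hΔ, inv_le_iff_one_le_mul₀ hP] at hΔK
    nlinarith
  have hscale : ((2:ℝ) ^ (-(2 * (m:ℤ)))) ^ (H - 1/2) * (L * 2 ^ (2 * m)) ^ (H - 1/2)
      = L ^ (H - 1/2) := by
    rw [← mul_rpow (by positivity) (by linarith), hΔ, mul_comm L, inv_mul_cancel_left₀ hP.ne']
  have hwindow := sum_abs_rpow_second_difference_window_le (α := H - 1/2) (by linarith)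
    (by linarith) hX (k := k) (by rw [hL]; linarith) hj
  simp only [sub_neg, mul_assoc _ L] at hwindow ⊢
  calc _ ≤ ((2:ℝ) ^ (-(2 * (m:ℤ)))) ^ (H - 1/2) * ((if H < 1/2 then (5:ℝ)/2 else 5/3) *
          |H - 1/2| * (L * 2 ^ (2 * m)) ^ (H - 1/2) * (j : ℝ) ^ (H - 1/2 - 2)) :=
        mul_le_mul_of_nonneg_left hwindow (by positivity)
    _ = _ := by rw [← hscale, show H - 5/2 = H - 1/2 - 2 by ring]; ring

/-- Let `H ∈ (0,1)`, `H ≠ 1/2`, `m ≥ 0` an integer, `K > 0` with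
`Δt := 2^{-2m} ≤ K`, `L = 4K`, and let `k` be an integer with `1 ≤ k ≤ K 2^{2m}`.
Then for every integer `j ≥ 2`:
`C_{m,k,j} := (Δt)^{H−1/2} Σ_{(j−1)L2^{2m} < v ≤ jL2^{2m}}
  | (k+v+1)^{H−1/2} − (k+v)^{H−1/2} − (v+1)^{H−1/2} + v^{H−1/2} |
  ≤ a_H |H−1/2| L^{H−1/2} j^{H−5/2}`,
where `a_H = 5/2` if `H < 1/2` and `a_H = 5/3` if `H > 1/2`.
The summation range is the set of naturals `v` with `⌊(j−1)L2^{2m}⌋ < v ≤ ⌊jL2^{2m}⌋`. -/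
theorem statement16 (H : ℝ) (hH0 : 0 < H) (hH1 : H < 1) (hHhalf : H ≠ 1/2)
    (m : ℕ) (K : ℝ) (hK : 0 < K) (hΔK : (2:ℝ)^(-(2*(m:ℤ))) ≤ K)
    (L : ℝ) (hL : L = 4*K)
    (k : ℕ) (hk1 : 1 ≤ k) (hkK : (k : ℝ) ≤ K * 2^(2*m))
    (j : ℕ) (hj : 2 ≤ j) :
    ((2:ℝ)^(-(2*(m:ℤ)))) ^ (H - 1/2) *
      ∑ v ∈ Finset.Ioc ⌊((j:ℝ) - 1) * L * 2^(2*m)⌋₊ ⌊(j:ℝ) * L * 2^(2*m)⌋₊,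
        |((k : ℝ) + v + 1) ^ (H - 1/2) - ((k : ℝ) + v) ^ (H - 1/2)
          - ((v : ℝ) + 1) ^ (H - 1/2) + (v : ℝ) ^ (H - 1/2)|
      ≤ (if H < 1/2 then (5:ℝ)/2 else 5/3) * |H - 1/2| * L ^ (H - 1/2) * (j : ℝ) ^ (H - 5/2) :=
  statement16_general H hH0 hH1 m K hΔK L hL k hkK j hj
end

section
/- For every H ∈ (0,1) with H ≠ 1/2 and every integer k ≥ 0, with the convention 0^{H−1/2} = 0: Σ_{r=−∞}^{k} [ (k + 1 − r)^{H−1/2} − (k − r)^{H−1/2} ]² ≤ 1 + (H − 1/2)² + (H − 1/2)²/(2 − 2H); in particular the series converges. -/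
/-!
Put `q = H - 1/2 < 1/2` and `a_n = ((n+1)^q - n^q)^2`, so that the series is `∑_{n ≥ 0} a_n`
after the substitution `n = k - r`. The first term `(1 - 0^q)^2` is at most `1` whatever the value
of `0^q` (it is `0` for `q = 0`, as `0^0 = 1`), and by the mean value theorem
`a_n ≤ q² n^(2q-2)` for `n ≥ 1`. Since `2q - 2 < -1`, the tail `∑_{n ≥ 2} n^(2q-2)` is bounded by
`1/(1-2q)`, comparing each term with the telescoping differences of the convex function
`x ↦ x^(2q-1)`.
-/

open Real Finset

namespace Real

lemma abs_rpow_sub_rpow_le {q x y : ℝ} (hq : q ≤ 1) (hx : 0 < x) (hxy : x ≤ y) :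
    |y ^ q - x ^ q| ≤ |q| * x ^ (q - 1) * (y - x) := by
  have hderiv : ∀ c ∈ Set.Ici x, ‖deriv (fun t : ℝ => t ^ q) c‖ ≤ |q| * x ^ (q - 1) := by
    intro c (hc : x ≤ c)
    rw [deriv_rpow_const, norm_mul, norm_eq_abs, norm_eq_abs,
      abs_of_pos (rpow_pos_of_pos (hx.trans_le hc) _)]
    exact mul_le_mul_of_nonneg_left (rpow_le_rpow_of_nonpos hx hc (by linarith)) (abs_nonneg q)
  have h := (convex_Ici x).norm_image_sub_le_of_norm_deriv_le
    (fun c (hc : x ≤ c) => differentiableAt_rpow_const_of_ne q (hx.trans_le hc).ne') hderiv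
    (le_refl x : x ∈ Set.Ici x) hxy
  rwa [norm_eq_abs, norm_eq_abs, abs_of_nonneg (sub_nonneg.2 hxy)] at h

lemma neg_mul_rpow_sub_one_mul_le {s x y : ℝ} (hs : s ≤ 0) (hx : 0 < x) (hxy : x ≤ y) :
    -s * y ^ (s - 1) * (y - x) ≤ x ^ s - y ^ s := by
  have h := (convex_Icc x y).image_sub_le_mul_sub_of_deriv_le (f := fun t : ℝ => t ^ s)
    (C := s * y ^ (s - 1))
    (fun c hc => (continuousAt_rpow_const _ _ (Or.inl (hx.trans_le hc.1).ne')).continuousWithinAt)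
    (fun c hc => (differentiableAt_rpow_const_of_ne s
      (hx.trans_le (interior_subset hc : c ∈ Set.Icc x y).1).ne').differentiableWithinAt)
    (fun c hc => by
      rw [interior_Icc] at hc
      rw [deriv_rpow_const]
      exact mul_le_mul_of_nonpos_left
        (rpow_le_rpow_of_nonpos (hx.trans hc.1) hc.2.le (by linarith)) hs)
    x (Set.left_mem_Icc.2 hxy) y (Set.right_mem_Icc.2 hxy) hxy
  linarith

lemma sum_range_rpow_add_two_le {p : ℝ} (hp : p < -1) (N : ℕ) :
    ∑ n ∈ range N, ((n : ℝ) + 2) ^ p ≤ 1 / (-1 - p) := by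
  have hp' : 0 < -1 - p := by linarith
  have hterm : ∀ n : ℕ, ((n : ℝ) + 2) ^ p * (-1 - p) ≤
      ((n : ℝ) + 1) ^ (p + 1) - (((n + 1 : ℕ) : ℝ) + 1) ^ (p + 1) := by
    intro n
    have h := neg_mul_rpow_sub_one_mul_le (s := p + 1) (x := (n : ℝ) + 1) (y := (n : ℝ) + 2)
      (by linarith) (by positivity) (by linarith)
    rw [add_sub_cancel_right, show (n : ℝ) + 2 - ((n : ℝ) + 1) = 1 by ring] at h
    push_cast
    rw [show (n : ℝ) + 1 + 1 = n + 2 by ring]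
    linarith
  rw [le_div_iff₀ hp', sum_mul]
  calc ∑ n ∈ range N, ((n : ℝ) + 2) ^ p * (-1 - p)
      ≤ ∑ n ∈ range N, (((n : ℝ) + 1) ^ (p + 1) - (((n + 1 : ℕ) : ℝ) + 1) ^ (p + 1)) :=
        sum_le_sum fun n _ => hterm n
    _ = 1 - ((N : ℝ) + 1) ^ (p + 1) := by
        rw [sum_range_sub' (fun n : ℕ => ((n : ℝ) + 1) ^ (p + 1))]
        simp
    _ ≤ 1 := sub_le_self _ (by positivity)

end Real

lemma hasSum_ite_le_iff {α : Type*} [AddCommMonoid α] [TopologicalSpace α] (f : ℤ → α) (k : ℤ)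
    (a : α) : HasSum (fun r => if r ≤ k then f r else 0) a ↔ HasSum (fun n : ℕ => f (k - n)) a := by
  have hinj : Function.Injective (fun n : ℕ => k - n) := fun m n h => by simpa using h
  rw [← hinj.hasSum_iff]
  · refine Eq.to_iff (congrArg (HasSum · a) (funext fun n => ?_))
    simp
  · intro r hr
    have : ¬ r ≤ k := fun hle => hr ⟨(k - r).toNat, by simp only; omega⟩
    simp [this]

noncomputable def rpowIncrementSq (q : ℝ) (n : ℕ) : ℝ := (((n : ℝ) + 1) ^ q - (n : ℝ) ^ q) ^ 2

lemma hasSum_ite_le_iff_hasSum_rpowIncrementSq (q : ℝ) (k : ℤ) (S : ℝ) :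
    HasSum (fun r : ℤ => if r ≤ k then
      ((((k + 1 - r : ℤ) : ℝ)) ^ q - ((k - r : ℤ) : ℝ) ^ q) ^ 2 else 0) S ↔
      HasSum (rpowIncrementSq q) S := by
  rw [hasSum_ite_le_iff]
  refine Eq.to_iff (congrArg (HasSum · S) (funext fun n => ?_))
  rw [rpowIncrementSq, show k + 1 - (k - n) = ((n + 1 : ℕ) : ℤ) by omega, sub_sub_cancel]
  push_cast
  rfl

lemma rpowIncrementSq_zero_le_one (q : ℝ) : rpowIncrementSq q 0 ≤ 1 := by
  have h0 := zero_rpow_nonneg q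
  have h1 := zero_rpow_le_one q
  simp only [rpowIncrementSq, Nat.cast_zero, zero_add, one_rpow]
  nlinarith

lemma rpowIncrementSq_le {q : ℝ} (hq : q ≤ 1) {n : ℕ} (hn : 1 ≤ n) :
    rpowIncrementSq q n ≤ q ^ 2 * (n : ℝ) ^ (2 * q - 2) := by
  have hn' : (0 : ℝ) < n := by exact_mod_cast hn
  have h := abs_rpow_sub_rpow_le hq hn' (le_add_of_nonneg_right zero_le_one)
  rw [add_sub_cancel_left, mul_one] at h
  calc rpowIncrementSq q n = |((n : ℝ) + 1) ^ q - (n : ℝ) ^ q| ^ 2 := (sq_abs _).symm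
    _ ≤ (|q| * (n : ℝ) ^ (q - 1)) ^ 2 := pow_le_pow_left₀ (abs_nonneg _) h 2
    _ = q ^ 2 * (n : ℝ) ^ (2 * q - 2) := by
        rw [mul_pow, sq_abs, ← rpow_mul_natCast hn'.le]
        congr 2
        push_cast
        ring

lemma sum_range_rpowIncrementSq_le {q : ℝ} (hq : q < 1 / 2) (N : ℕ) :
    ∑ n ∈ range N, rpowIncrementSq q n ≤ 1 + q ^ 2 + q ^ 2 / (1 - 2 * q) := by
  have htail : ∑ n ∈ range N, rpowIncrementSq q (n + 2) ≤ q ^ 2 / (1 - 2 * q) := by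
    calc ∑ n ∈ range N, rpowIncrementSq q (n + 2)
        ≤ ∑ n ∈ range N, q ^ 2 * ((n : ℝ) + 2) ^ (2 * q - 2) :=
          sum_le_sum fun n _ => by exact_mod_cast rpowIncrementSq_le (by linarith) (by omega)
      _ ≤ q ^ 2 * (1 / (-1 - (2 * q - 2))) := by
          rw [← mul_sum]
          exact mul_le_mul_of_nonneg_left (sum_range_rpow_add_two_le (by linarith) N) (sq_nonneg q)
      _ = q ^ 2 / (1 - 2 * q) := by ring_nf
  have hone : rpowIncrementSq q 1 ≤ q ^ 2 := by
    simpa using rpowIncrementSq_le (n := 1) (by linarith) le_rfl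
  calc ∑ n ∈ range N, rpowIncrementSq q n
      ≤ ∑ n ∈ range (N + 2), rpowIncrementSq q n :=
        sum_le_sum_of_subset_of_nonneg (range_subset_range.2 (by omega))
          fun n _ _ => sq_nonneg _
    _ = ∑ n ∈ range N, rpowIncrementSq q (n + 2) + rpowIncrementSq q 1 + rpowIncrementSq q 0 := by
        rw [sum_range_succ', sum_range_succ']
    _ ≤ 1 + q ^ 2 + q ^ 2 / (1 - 2 * q) := by
        linarith [rpowIncrementSq_zero_le_one q]

theorem statement17_general (H : ℝ) (hH1 : H < 1)
    (k : ℕ) :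
    Summable (fun r : ℤ => if r ≤ (k : ℤ) then
      ((((k : ℤ) + 1 - r : ℤ) : ℝ) ^ (H - 1/2) - (((k : ℤ) - r : ℤ) : ℝ) ^ (H - 1/2))^2
      else 0) ∧
    ∑' r : ℤ, (if r ≤ (k : ℤ) then
      ((((k : ℤ) + 1 - r : ℤ) : ℝ) ^ (H - 1/2) - (((k : ℤ) - r : ℤ) : ℝ) ^ (H - 1/2))^2
      else 0)
      ≤ 1 + (H - 1/2)^2 + (H - 1/2)^2 / (2 - 2*H) := by
  have hpartial (N : ℕ) :
      ∑ n ∈ range N, rpowIncrementSq (H - 1/2) n ≤ 1 + (H - 1/2)^2 + (H - 1/2)^2 / (2 - 2*H) := by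
    convert sum_range_rpowIncrementSq_le (q := H - 1/2) (by linarith) N using 3
    ring
  have hnonneg (n : ℕ) : 0 ≤ rpowIncrementSq (H - 1/2) n := sq_nonneg _
  have hsum := (hasSum_ite_le_iff_hasSum_rpowIncrementSq (H - 1/2) k _).2
    (summable_of_sum_range_le hnonneg hpartial).hasSum
  exact ⟨hsum.summable, hsum.tsum_eq ▸ tsum_le_of_sum_range_le hnonneg hpartial⟩

/-- For every `H ∈ (0,1)` with `H ≠ 1/2` and every integer `k ≥ 0`, with the
convention `0^{H−1/2} = 0` (which is automatic for `Real.rpow` since `H − 1/2 ≠ 0`),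
`Σ_{r=−∞}^{k} [ (k+1−r)^{H−1/2} − (k−r)^{H−1/2} ]² ≤ 1 + (H−1/2)² + (H−1/2)²/(2−2H)`;
in particular the series converges.  The sum over the integers `r ≤ k` is realized as a
`tsum` over `r : ℤ`, the summand vanishing for `r > k`. -/
theorem statement17 (H : ℝ) (hH0 : 0 < H) (hH1 : H < 1) (hHhalf : H ≠ 1/2)
    (k : ℕ) :
    Summable (fun r : ℤ => if r ≤ (k : ℤ) then
      ((((k : ℤ) + 1 - r : ℤ) : ℝ) ^ (H - 1/2) - (((k : ℤ) - r : ℤ) : ℝ) ^ (H - 1/2))^2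
      else 0) ∧
    ∑' r : ℤ, (if r ≤ (k : ℤ) then
      ((((k : ℤ) + 1 - r : ℤ) : ℝ) ^ (H - 1/2) - (((k : ℤ) - r : ℤ) : ℝ) ^ (H - 1/2))^2
      else 0)
      ≤ 1 + (H - 1/2)^2 + (H - 1/2)^2 / (2 - 2*H) :=
  statement17_general H hH1 k
end

section
/- For every H ∈ (0,1): Σ_{j=2}^{∞} j^{1/4} (log_* j)^{3/4} j^{H−5/2} < (5/4 − H)^{−1} + (5/4 − H)^{−2} e^{H−5/4}; consequently this sum is less than 2.5 if 0 < H < 1/2 and less than 16.5 if 1/2 < H < 1. Moreover Σ_{j=2}^{∞} j^{1/4}(log_* j)^{3/4} j^{H−5/2} < ∫_1^∞ x^{H−9/4} log_*(x) dx = (5/4 − H)^{−1} + (5/4 − H)^{−2} e^{H−5/4}. -/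
open Real Set MeasureTheory Filter

lemma one_le_logStar (x : ℝ) : 1 ≤ logStar x := le_max_left _ _

lemma logStar_eq_one {x : ℝ} (hx₀ : 0 < x) (hx : x ≤ exp 1) : logStar x = 1 :=
  max_eq_left ((log_le_iff_le_exp hx₀).2 hx)

lemma logStar_eq_log {x : ℝ} (hx : exp 1 ≤ x) : logStar x = log x :=
  max_eq_right ((le_log_iff_exp_le ((exp_pos 1).trans_le hx)).2 hx)

lemma one_lt_logStar {x : ℝ} (hx : exp 1 < x) : 1 < logStar x := by
  rw [logStar_eq_log hx.le]
  exact (lt_log_iff_exp_lt ((exp_pos 1).trans hx)).2 hx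

section RpowMulLogStar

variable {c : ℝ}

lemma rpow_mul_logStar_nonneg {x : ℝ} (hx : 0 ≤ x) : 0 ≤ x ^ c * logStar x :=
  mul_nonneg (rpow_nonneg hx c) (zero_le_one.trans (one_le_logStar x))

/-- On `[e, ∞)` write `x ^ c * log x = x ^ (c + 1) * (log x / x)`, a product of two nonnegative
antitone factors; on `[1, e]` the factor `logStar x` is constant. -/
lemma antitoneOn_rpow_mul_logStar (hc : c ≤ -1) :
    AntitoneOn (fun x : ℝ => x ^ c * logStar x) (Ici 1) := by
  have h_small : AntitoneOn (fun x : ℝ => x ^ c * logStar x) (Icc 1 (exp 1)) := by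
    intro x hx y hy hxy
    have hx₀ : 0 < x := zero_lt_one.trans_le hx.1
    simp only [logStar_eq_one hx₀ hx.2, logStar_eq_one (hx₀.trans_le hxy) hy.2, mul_one]
    exact rpow_le_rpow_of_nonpos hx₀ hxy (by linarith)
  have h_large : AntitoneOn (fun x : ℝ => x ^ c * logStar x) (Ici (exp 1)) := by
    intro x hx y hy hxy
    have hx₀ : 0 < x := (exp_pos 1).trans_le hx
    have hy₀ : 0 < y := hx₀.trans_le hxy
    have hfactor : ∀ z, 0 < z → exp 1 ≤ z → z ^ c * logStar z = z ^ (c + 1) * (log z / z) := by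
      intro z hz₀ hz
      rw [logStar_eq_log hz, rpow_add_one hz₀.ne']
      field_simp
    simp only [hfactor x hx₀ hx, hfactor y hy₀ hy]
    exact mul_le_mul (rpow_le_rpow_of_nonpos hx₀ hxy (by linarith))
      (log_div_self_antitoneOn hx hy hxy)
      (div_nonneg (log_nonneg (one_le_exp zero_le_one |>.trans hy)) hy₀.le)
      (rpow_nonneg hx₀.le _)
  have := h_small.union_right h_large (isGreatest_Icc (one_le_exp zero_le_one)) isLeast_Ici
  rwa [Icc_union_Ici_eq_Ici (one_le_exp zero_le_one)] at this

lemma hasDerivAt_rpow_mul_log_antideriv (hc : c + 1 ≠ 0) {x : ℝ} (hx : 0 < x) :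
    HasDerivAt (fun x : ℝ => x ^ (c + 1) * ((c + 1) * log x - 1) / (c + 1) ^ 2)
      (x ^ c * log x) x := by
  have hpow : HasDerivAt (fun x : ℝ => x ^ (c + 1)) ((c + 1) * x ^ c) x := by
    simpa using hasDerivAt_rpow_const (p := c + 1) (Or.inl hx.ne')
  have := (hpow.mul (((hasDerivAt_log hx.ne').const_mul (c + 1)).sub_const 1)).div_const
    ((c + 1) ^ 2)
  refine this.congr_deriv ?_
  rw [rpow_add_one hx.ne']
  field_simp
  ring

lemma tendsto_rpow_mul_log_antideriv (hc : c + 1 < 0) :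
    Tendsto (fun x : ℝ => x ^ (c + 1) * ((c + 1) * log x - 1) / (c + 1) ^ 2) atTop (nhds 0) := by
  have hs : 0 < -(c + 1) := neg_pos.2 hc
  have hpow : Tendsto (fun x : ℝ => x ^ (c + 1)) atTop (nhds 0) := by
    simpa using tendsto_rpow_neg_atTop hs
  have hlog : Tendsto (fun x : ℝ => x ^ (c + 1) * log x) atTop (nhds 0) := by
    refine (isLittleO_log_rpow_atTop hs).tendsto_div_nhds_zero.congr' ?_
    filter_upwards [eventually_gt_atTop 0] with x hx
    rw [rpow_neg hx.le, div_inv_eq_mul, mul_comm]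
  have := ((hlog.const_mul (c + 1)).sub hpow).div_const ((c + 1) ^ 2)
  simp only [mul_zero, sub_zero, zero_div] at this
  refine this.congr fun x => ?_
  ring

lemma rpow_mul_log_nonneg_of_one_le {x : ℝ} (hx : 1 ≤ x) : 0 ≤ x ^ c * log x :=
  mul_nonneg (rpow_nonneg (zero_le_one.trans hx) c) (log_nonneg hx)

lemma integrableOn_rpow_mul_log_Ioi_exp_one (hc : c < -1) :
    IntegrableOn (fun x : ℝ => x ^ c * log x) (Ioi (exp 1)) :=
  integrableOn_Ioi_deriv_of_nonneg'
    (fun x hx => hasDerivAt_rpow_mul_log_antideriv (by linarith) ((exp_pos 1).trans_le hx))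
    (fun x hx => rpow_mul_log_nonneg_of_one_le ((one_le_exp zero_le_one).trans hx.out.le))
    (tendsto_rpow_mul_log_antideriv (by linarith))

lemma integral_rpow_mul_log_Ioi_exp_one (hc : c < -1) :
    ∫ x in Ioi (exp 1), x ^ c * log x = exp (c + 1) * (1 - (c + 1)) / (c + 1) ^ 2 := by
  rw [integral_Ioi_of_hasDerivAt_of_nonneg'
    (fun x hx => hasDerivAt_rpow_mul_log_antideriv (by linarith) ((exp_pos 1).trans_le hx))
    (fun x hx => rpow_mul_log_nonneg_of_one_le ((one_le_exp zero_le_one).trans hx.out.le))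
    (tendsto_rpow_mul_log_antideriv (by linarith)), exp_one_rpow, log_exp]
  ring

lemma integrableOn_rpow_mul_logStar (hc : c < -1) :
    IntegrableOn (fun x : ℝ => x ^ c * logStar x) (Ioi 1) := by
  rw [← Ioc_union_Ioi_eq_Ioi (one_le_exp zero_le_one), integrableOn_union]
  refine ⟨(((antitoneOn_rpow_mul_logStar hc.le).mono Icc_subset_Ici_self).integrableOn_isCompact
    isCompact_Icc).mono_set Ioc_subset_Icc_self, ?_⟩
  refine (integrableOn_rpow_mul_log_Ioi_exp_one hc).congr_fun (fun x hx => ?_) measurableSet_Ioi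
  simp only [logStar_eq_log hx.out.le]

lemma integral_rpow_mul_logStar (hc : c < -1) :
    ∫ x in Ioi 1, x ^ c * logStar x = -(c + 1)⁻¹ + (c + 1)⁻¹ ^ 2 * exp (c + 1) := by
  have he : (1 : ℝ) ≤ exp 1 := one_le_exp zero_le_one
  have hsmall : ∫ x in Ioc 1 (exp 1), x ^ c * logStar x = ∫ x in (1 : ℝ)..exp 1, x ^ c := by
    rw [intervalIntegral.integral_of_le he]
    refine setIntegral_congr_fun measurableSet_Ioc fun x hx => ?_
    simp only [logStar_eq_one (zero_lt_one.trans hx.1) hx.2, mul_one]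
  have hlarge : ∫ x in Ioi (exp 1), x ^ c * logStar x = ∫ x in Ioi (exp 1), x ^ c * log x := by
    refine setIntegral_congr_fun measurableSet_Ioi fun x hx => ?_
    simp only [logStar_eq_log hx.out.le]
  have hzero : (0 : ℝ) ∉ uIcc 1 (exp 1) := by
    rw [uIcc_of_le he]
    exact fun h => absurd h.1 (by norm_num)
  rw [← Ioc_union_Ioi_eq_Ioi he, setIntegral_union (Ioc_disjoint_Ioi le_rfl) measurableSet_Ioi
    ((integrableOn_rpow_mul_logStar hc).mono_set Ioc_subset_Ioi_self)
    ((integrableOn_rpow_mul_logStar hc).mono_set (Ioi_subset_Ioi he)), hsmall, hlarge,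
    integral_rpow (Or.inr ⟨by linarith, hzero⟩), integral_rpow_mul_log_Ioi_exp_one hc,
    exp_one_rpow, one_rpow]
  have : c + 1 ≠ 0 := by linarith
  field_simp
  ring

lemma summable_rpow_mul_logStar_nat_add_two (hc : c < -1) :
    Summable (fun n : ℕ => ((n : ℝ) + 2) ^ c * logStar ((n : ℝ) + 2)) := by
  have := AntitoneOn.summable_of_integrableOn_Ioi (N := 1)
    (by simpa using antitoneOn_rpow_mul_logStar hc.le)
    (by simpa using integrableOn_rpow_mul_logStar hc)
    (fun t ht => rpow_mul_logStar_nonneg (zero_le_one.trans (by simpa using ht.out.le)))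
  simpa using (summable_nat_add_iff 2).2 this

lemma tsum_rpow_mul_logStar_nat_add_two_le_integral (hc : c < -1) :
    ∑' n : ℕ, ((n : ℝ) + 2) ^ c * logStar ((n : ℝ) + 2) ≤ ∫ x in Ioi 1, x ^ c * logStar x := by
  have := AntitoneOn.tsum_comp_add_le_integral (f := fun x : ℝ => x ^ c * logStar x) 1
    (by simpa using antitoneOn_rpow_mul_logStar hc.le)
    (by simpa using integrableOn_rpow_mul_logStar hc)
    (fun t ht => rpow_mul_logStar_nonneg (zero_le_one.trans (by simpa using ht.out.le)))
  simpa [add_assoc, one_add_one_eq_two] using this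

end RpowMulLogStar

lemma logStar_rpow_le_logStar {a : ℝ} (ha : a ≤ 1) (x : ℝ) : logStar x ^ a ≤ logStar x := by
  simpa using rpow_le_rpow_of_exponent_le (one_le_logStar x) ha

lemma logStar_rpow_lt_logStar {a : ℝ} (ha : a < 1) {x : ℝ} (hx : exp 1 < x) :
    logStar x ^ a < logStar x := by
  simpa using rpow_lt_rpow_of_exponent_lt (one_lt_logStar hx) ha

lemma rpow_mul_logStar_rpow_mul_rpow (H : ℝ) {x : ℝ} (hx : 0 < x) :
    x ^ ((1 : ℝ) / 4) * logStar x ^ ((3 : ℝ) / 4) * x ^ (H - 5 / 2)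
      = x ^ (H - 9 / 4) * logStar x ^ ((3 : ℝ) / 4) := by
  rw [mul_right_comm, ← rpow_add hx]
  ring_nf

lemma inv_add_inv_sq_mul_exp_neg_lt {s t : ℝ} (hs : 0 < s) (hst : s < t) :
    t⁻¹ + t⁻¹ ^ 2 * exp (-t) < s⁻¹ + s⁻¹ ^ 2 * exp (-s) := by
  have hinv : t⁻¹ < s⁻¹ := inv_strictAnti₀ hs hst
  have hinv₀ : 0 ≤ t⁻¹ := inv_nonneg.2 (hs.trans hst).le
  gcongr

lemma inv_add_inv_sq_mul_exp_neg_three_quarters_le :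
    (3 / 4 : ℝ)⁻¹ + (3 / 4 : ℝ)⁻¹ ^ 2 * exp (-(3 / 4)) ≤ 2.5 := by
  have hexp : exp (-(3 / 4)) ≤ 4 / 7 := by
    rw [exp_neg, inv_le_comm₀ (exp_pos _) (by norm_num)]
    linarith [add_one_le_exp (3 / 4 : ℝ)]
  norm_num
  linarith

lemma inv_add_inv_sq_mul_exp_neg_one_quarter_le :
    (1 / 4 : ℝ)⁻¹ + (1 / 4 : ℝ)⁻¹ ^ 2 * exp (-(1 / 4)) ≤ 16.5 := by
  have hexp : exp (-(1 / 4)) ≤ 32 / 41 := by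
    rw [exp_neg, inv_le_comm₀ (exp_pos _) (by norm_num)]
    linarith [quadratic_le_exp_of_nonneg (by norm_num : (0 : ℝ) ≤ 1 / 4)]
  norm_num
  linarith

theorem statement19_general (H : ℝ) (hH1 : H < 1) :
    Summable (fun n : ℕ =>
      ((n : ℝ)+2)^((1:ℝ)/4) * (logStar ((n : ℝ)+2))^((3:ℝ)/4) * ((n : ℝ)+2)^(H - 5/2)) ∧
    (∑' n : ℕ,
      ((n : ℝ)+2)^((1:ℝ)/4) * (logStar ((n : ℝ)+2))^((3:ℝ)/4) * ((n : ℝ)+2)^(H - 5/2))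
      < (5/4 - H)⁻¹ + (5/4 - H)⁻¹^2 * Real.exp (H - 5/4) ∧
    (H < 1/2 → (∑' n : ℕ,
      ((n : ℝ)+2)^((1:ℝ)/4) * (logStar ((n : ℝ)+2))^((3:ℝ)/4) * ((n : ℝ)+2)^(H - 5/2))
      < 2.5) ∧
    (1/2 < H → (∑' n : ℕ,
      ((n : ℝ)+2)^((1:ℝ)/4) * (logStar ((n : ℝ)+2))^((3:ℝ)/4) * ((n : ℝ)+2)^(H - 5/2))
      < 16.5) ∧
    (∑' n : ℕ,
      ((n : ℝ)+2)^((1:ℝ)/4) * (logStar ((n : ℝ)+2))^((3:ℝ)/4) * ((n : ℝ)+2)^(H - 5/2))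
      < ∫ x in Set.Ioi (1:ℝ), x^(H - 9/4) * logStar x ∧
    (∫ x in Set.Ioi (1:ℝ), x^(H - 9/4) * logStar x)
      = (5/4 - H)⁻¹ + (5/4 - H)⁻¹^2 * Real.exp (H - 5/4) := by
  have hc : H - 9 / 4 < -1 := by linarith
  have hterm (n : ℕ) := rpow_mul_logStar_rpow_mul_rpow H (by positivity : (0 : ℝ) < n + 2)
  have hle (n : ℕ) := (hterm n).trans_le (mul_le_mul_of_nonneg_left
    (logStar_rpow_le_logStar (by norm_num) _) (rpow_nonneg (by positivity) _))
  have hlt₁ := (hterm 1).trans_lt (mul_lt_mul_of_pos_left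
    (logStar_rpow_lt_logStar (a := 3 / 4) (by norm_num) (by norm_num; linarith [exp_one_lt_d9]))
    (rpow_pos_of_pos (by positivity) _))
  have hnonneg (n : ℕ) : 0 ≤ ((n : ℝ) + 2) ^ ((1 : ℝ) / 4) * logStar ((n : ℝ) + 2) ^ ((3 : ℝ) / 4)
      * ((n : ℝ) + 2) ^ (H - 5 / 2) := by
    have := zero_le_one.trans (one_le_logStar ((n : ℝ) + 2))
    positivity
  have hsum := summable_rpow_mul_logStar_nat_add_two hc
  have hlt := (hsum.tsum_lt_tsum_of_nonneg hnonneg hle hlt₁).trans_le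
    (tsum_rpow_mul_logStar_nat_add_two_le_integral hc)
  have hval : ∫ x in Ioi (1 : ℝ), x ^ (H - 9 / 4) * logStar x
      = (5 / 4 - H)⁻¹ + (5 / 4 - H)⁻¹ ^ 2 * exp (-(5 / 4 - H)) := by
    rw [integral_rpow_mul_logStar hc, show H - 9 / 4 + 1 = -(5 / 4 - H) by ring, inv_neg, neg_neg,
      neg_sq]
  have hbound := hlt.trans_eq hval
  rw [show H - 5 / 4 = -(5 / 4 - H) by ring]
  refine ⟨hsum.of_nonneg_of_le hnonneg hle, hbound, fun hH => ?_, fun hH => ?_, hlt, hval⟩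
  · exact (hbound.trans (inv_add_inv_sq_mul_exp_neg_lt (by norm_num) (by linarith))).trans_le
      inv_add_inv_sq_mul_exp_neg_three_quarters_le
  · exact (hbound.trans (inv_add_inv_sq_mul_exp_neg_lt (by norm_num) (by linarith))).trans_le
      inv_add_inv_sq_mul_exp_neg_one_quarter_le

/-- For every `H ∈ (0,1)`:
`Σ_{j=2}^{∞} j^{1/4} (log_* j)^{3/4} j^{H−5/2} < (5/4−H)⁻¹ + (5/4−H)⁻² e^{H−5/4}`;
consequently the sum is `< 2.5` if `0 < H < 1/2` and `< 16.5` if `1/2 < H < 1`.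
Moreover `Σ_{j=2}^{∞} j^{1/4}(log_* j)^{3/4} j^{H−5/2} < ∫_1^∞ x^{H−9/4} log_*(x) dx
 = (5/4−H)⁻¹ + (5/4−H)⁻² e^{H−5/4}`.
(The sum over `j ≥ 2` is realized by the index shift `j = n + 2`, `n : ℕ`.) -/
theorem statement19 (H : ℝ) (hH0 : 0 < H) (hH1 : H < 1) :
    Summable (fun n : ℕ =>
      ((n : ℝ)+2)^((1:ℝ)/4) * (logStar ((n : ℝ)+2))^((3:ℝ)/4) * ((n : ℝ)+2)^(H - 5/2)) ∧
    (∑' n : ℕ,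
      ((n : ℝ)+2)^((1:ℝ)/4) * (logStar ((n : ℝ)+2))^((3:ℝ)/4) * ((n : ℝ)+2)^(H - 5/2))
      < (5/4 - H)⁻¹ + (5/4 - H)⁻¹^2 * Real.exp (H - 5/4) ∧
    (H < 1/2 → (∑' n : ℕ,
      ((n : ℝ)+2)^((1:ℝ)/4) * (logStar ((n : ℝ)+2))^((3:ℝ)/4) * ((n : ℝ)+2)^(H - 5/2))
      < 2.5) ∧
    (1/2 < H → (∑' n : ℕ,
      ((n : ℝ)+2)^((1:ℝ)/4) * (logStar ((n : ℝ)+2))^((3:ℝ)/4) * ((n : ℝ)+2)^(H - 5/2))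
      < 16.5) ∧
    (∑' n : ℕ,
      ((n : ℝ)+2)^((1:ℝ)/4) * (logStar ((n : ℝ)+2))^((3:ℝ)/4) * ((n : ℝ)+2)^(H - 5/2))
      < ∫ x in Set.Ioi (1:ℝ), x^(H - 9/4) * logStar x ∧
    (∫ x in Set.Ioi (1:ℝ), x^(H - 9/4) * logStar x)
      = (5/4 - H)⁻¹ + (5/4 - H)⁻¹^2 * Real.exp (H - 5/4) :=
  statement19_general H hH1
end
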